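/- arXiv:2509.06267 — 9 statements merged into one kernel-verified Lean document; each statement's English description precedes it below -/
import Mathlib

section
/- Let M be a contract, let a be an interior point of A, and let r* ∈ R(a;M). If the functions a' ↦ T(a';M) and a' ↦ u_A(a',r*) are both differentiable at a, then the derivative of a' ↦ T(a';M) at a equals ∂₁u_A(a,r*), the partial derivative of u_A in its first argument evaluated at (a,r*). -/
open MeasureTheory Set

/-- The agent's value of optimally choosing a plan from contract `M` given outsider action `r`:
`V(r;M) = max_{(a,t) ∈ M} (u_A(a,r) - t)`. -/
noncomputable def Vfun (uA : ℝ → ℝ → ℝ) (M : Set (ℝ × ℝ)) (r : ℝ) : ℝ :=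
  sSup ((fun p : ℝ × ℝ => uA p.1 r - p.2) '' M)

/-- The dual transfer `T(a;M) = max_{r ∈ R} (u_A(a,r) - V(r;M))`. -/
noncomputable def Tfun (uA : ℝ → ℝ → ℝ) (R : Set ℝ) (M : Set (ℝ × ℝ)) (a : ℝ) : ℝ :=
  sSup ((fun r => uA a r - Vfun uA M r) '' R)

/-- The set of dual replies `R(a;M)`: maximizers of `r ↦ u_A(a,r) - V(r;M)` over `R`. -/
def dualReplies (uA : ℝ → ℝ → ℝ) (R : Set ℝ) (M : Set (ℝ × ℝ)) (a : ℝ) : Set ℝ :=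
  {r | r ∈ R ∧ uA a r - Vfun uA M r = Tfun uA R M a}

/-- A contract is a nonempty compact subset of `A × ℝ` where `A = [a₀, ā]`. -/
def IsContract (a0 abar : ℝ) (M : Set (ℝ × ℝ)) : Prop :=
  M.Nonempty ∧ IsCompact M ∧ M ⊆ (Set.Icc a0 abar) ×ˢ (Set.univ : Set ℝ)

/-!
Keeping the dual reply `r*` fixed is feasible at every action `x`, so
`T(x) ≥ u_A(x, r*) - V(r*)`, with equality at `x = a` because `r*` is optimal there. The
difference of the two sides thus has a minimum at `a`, where its derivative must vanish.
-/

open Filter Topology Function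

theorem deriv_eq_of_eventually_le_of_eq {f g : ℝ → ℝ} {a : ℝ}
    (hf : DifferentiableAt ℝ f a) (hg : DifferentiableAt ℝ g a)
    (hle : ∀ᶠ x in 𝓝 a, g x ≤ f x) (heq : f a = g a) : deriv f a = deriv g a := by
  have hmin : IsLocalMin (f - g) a :=
    hle.mono fun x hx => by simpa only [Pi.sub_apply, heq, sub_self, sub_nonneg] using hx
  have hderiv : deriv (f - g) a = deriv f a - deriv g a := deriv_sub hf hg
  linarith [hmin.deriv_eq_zero]

section Envelope

variable {uA : ℝ → ℝ → ℝ} {M : Set (ℝ × ℝ)}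

theorem le_Vfun (huA : Continuous (uncurry uA)) (hM : IsCompact M) {p : ℝ × ℝ} (hp : p ∈ M)
    (r : ℝ) : uA p.1 r - p.2 ≤ Vfun uA M r :=
  le_csSup (hM.bddAbove_image
    (((huA.uncurry_right r).comp continuous_fst).sub continuous_snd).continuousOn)
    (mem_image_of_mem _ hp)

theorem bddAbove_Tfun_image (huA : Continuous (uncurry uA)) (hMne : M.Nonempty)
    (hM : IsCompact M) {R : Set ℝ} (hR : IsCompact R) (x : ℝ) :
    BddAbove ((fun r => uA x r - Vfun uA M r) '' R) := by
  obtain ⟨p, hp⟩ := hMne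
  have hbound : ContinuousOn (fun r => uA x r - (uA p.1 r - p.2)) R :=
    ((huA.uncurry_left x).sub ((huA.uncurry_left p.1).sub continuous_const)).continuousOn
  obtain ⟨C, hC⟩ := hR.bddAbove_image hbound
  refine ⟨C, ?_⟩
  rintro _ ⟨r, hr, rfl⟩
  linarith [le_Vfun huA hM hp r, hC ⟨r, hr, rfl⟩]

theorem sub_Vfun_le_Tfun (huA : Continuous (uncurry uA)) (hMne : M.Nonempty)
    (hM : IsCompact M) {R : Set ℝ} (hR : IsCompact R) (x : ℝ) {r : ℝ} (hr : r ∈ R) :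
    uA x r - Vfun uA M r ≤ Tfun uA R M x :=
  le_csSup (bddAbove_Tfun_image huA hMne hM hR x) (mem_image_of_mem _ hr)

end Envelope

theorem stmt3_general (a0 abar rlo rhi : ℝ)
    (uA : ℝ → ℝ → ℝ) (huA : Continuous fun p : ℝ × ℝ => uA p.1 p.2)
    (M : Set (ℝ × ℝ)) (hM : IsContract a0 abar M)
    (a : ℝ)
    (rstar : ℝ) (hrstar : rstar ∈ dualReplies uA (Set.Icc rlo rhi) M a)
    (hTdiff : DifferentiableAt ℝ (Tfun uA (Set.Icc rlo rhi) M) a)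
    (hudiff : DifferentiableAt ℝ (fun x => uA x rstar) a) :
    deriv (Tfun uA (Set.Icc rlo rhi) M) a = deriv (fun x => uA x rstar) a := by
  obtain ⟨hMne, hMcomp, -⟩ := hM
  have hle : ∀ x, uA x rstar - Vfun uA M rstar ≤ Tfun uA (Set.Icc rlo rhi) M x := fun x =>
    sub_Vfun_le_Tfun huA hMne hMcomp isCompact_Icc x hrstar.1
  have henvelope := deriv_eq_of_eventually_le_of_eq hTdiff (hudiff.sub_const _)
    (Eventually.of_forall hle) hrstar.2.symm
  simpa only [deriv_sub_const] using henvelope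

/-- Envelope theorem for the dual transfer: if `a` is interior, `r* ∈ R(a;M)`,
and both `T(·;M)` and `u_A(·,r*)` are differentiable at `a`, then the derivative of `T(·;M)`
at `a` equals `∂₁u_A(a,r*)`. -/
theorem stmt3 (a0 abar rlo rhi : ℝ) (hA : a0 < abar) (hR : rlo < rhi)
    (uA : ℝ → ℝ → ℝ) (huA : Continuous fun p : ℝ × ℝ => uA p.1 p.2)
    (M : Set (ℝ × ℝ)) (hM : IsContract a0 abar M)
    (a : ℝ) (haInt : a ∈ Set.Ioo a0 abar)
    (rstar : ℝ) (hrstar : rstar ∈ dualReplies uA (Set.Icc rlo rhi) M a)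
    (hTdiff : DifferentiableAt ℝ (Tfun uA (Set.Icc rlo rhi) M) a)
    (hudiff : DifferentiableAt ℝ (fun x => uA x rstar) a) :
    deriv (Tfun uA (Set.Icc rlo rhi) M) a = deriv (fun x => uA x rstar) a :=
  stmt3_general a0 abar rlo rhi uA huA M hM a rstar hrstar hTdiff hudiff
end

section
/- Let M be a contract. Under Assumption 1 (ranked incentives), the set of a ∈ A for which there exist r₁, r₂ ∈ R(a;M) with r₁ ≻_AI r₂ is countable. -/
open MeasureTheory Set

/-- `r₁ ≽_AI r₂`: `r₁` weakly dominates `r₂` in the order of agent incentives, where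
`d1 a r` denotes the partial derivative `∂₁u_A(a,r)`. -/
def succeqAI (d1 : ℝ → ℝ → ℝ) (A : Set ℝ) (r1 r2 : ℝ) : Prop :=
  ∀ a ∈ A, d1 a r2 ≤ d1 a r1

/-- `r₁ ≻_AI r₂`: strict dominance in the order of agent incentives. -/
def succAI (d1 : ℝ → ℝ → ℝ) (A : Set ℝ) (r1 r2 : ℝ) : Prop :=
  succeqAI d1 A r1 r2 ∧ ¬ succeqAI d1 A r2 r1

/-- Assumption 1 (ranked incentives): `≽_AI` is complete on `R`, and strict dominance gives
strictly higher agent incentives everywhere. -/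
def RankedIncentives (d1 : ℝ → ℝ → ℝ) (A R : Set ℝ) : Prop :=
  (∀ r1 ∈ R, ∀ r2 ∈ R, succeqAI d1 A r1 r2 ∨ succeqAI d1 A r2 r1) ∧
  (∀ r1 ∈ R, ∀ r2 ∈ R, succAI d1 A r1 r2 → ∀ a ∈ A, d1 a r2 < d1 a r1)

/-- Under ranked incentives, the set of `a ∈ A` at which two strictly `≻_AI`-ranked
dual replies coexist is countable. -/
theorem stmt4 (a0 abar rlo rhi : ℝ) (hA : a0 < abar) (hR : rlo < rhi)
    (uA : ℝ → ℝ → ℝ) (huA : Continuous fun p : ℝ × ℝ => uA p.1 p.2)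
    (d1 : ℝ → ℝ → ℝ)
    (hd1 : ∀ a r : ℝ, HasDerivAt (fun x => uA x r) (d1 a r) a)
    (hd1c : Continuous fun p : ℝ × ℝ => d1 p.1 p.2)
    (hRI : RankedIncentives d1 (Set.Icc a0 abar) (Set.Icc rlo rhi))
    (M : Set (ℝ × ℝ)) (hM : IsContract a0 abar M) :
    Set.Countable {a ∈ Set.Icc a0 abar |
      ∃ r1 ∈ dualReplies uA (Set.Icc rlo rhi) M a,
      ∃ r2 ∈ dualReplies uA (Set.Icc rlo rhi) M a,
        succAI d1 (Set.Icc a0 abar) r1 r2} := by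
  classical
  obtain ⟨p, hp⟩ := hM.1
  set A := Set.Icc a0 abar with hAdef
  set R := Set.Icc rlo rhi with hRdef
  set S := {a ∈ A | ∃ r1 ∈ dualReplies uA R M a, ∃ r2 ∈ dualReplies uA R M a,
      succAI d1 A r1 r2} with hSdef
  have ha0A : a0 ∈ A := ⟨le_refl _, hA.le⟩
  -- V is bounded below by the value of plan p
  have hVlb : ∀ r : ℝ, uA p.1 r - p.2 ≤ Vfun uA M r := by
    intro r
    have hc : Continuous fun q : ℝ × ℝ => uA q.1 r - q.2 :=
      (huA.comp (continuous_fst.prodMk continuous_const)).sub continuous_snd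
    exact le_csSup (hM.2.1.image hc).bddAbove (Set.mem_image_of_mem _ hp)
  -- each value uA a r - V r with r ∈ R is at most T a
  have hTub : ∀ a : ℝ, ∀ r ∈ R, uA a r - Vfun uA M r ≤ Tfun uA R M a := by
    intro a r hr
    have hc : Continuous fun s : ℝ => uA a s - uA p.1 s :=
      (huA.comp (continuous_const.prodMk continuous_id)).sub
        (huA.comp (continuous_const.prodMk continuous_id))
    obtain ⟨C, hC⟩ := (isCompact_Icc.image hc).bddAbove
    have hbdd : BddAbove ((fun s => uA a s - Vfun uA M s) '' R) := by
      refine ⟨C + p.2, ?_⟩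
      rintro x ⟨s, hs, rfl⟩
      have h1 := hVlb s
      have h2 := hC (Set.mem_image_of_mem _ hs)
      dsimp
      linarith
    exact le_csSup hbdd (Set.mem_image_of_mem _ hr)
  -- strict single crossing from the derivative ranking
  have hSC : ∀ r r', r ∈ R → r' ∈ R → succAI d1 A r r' → ∀ a ∈ A, ∀ a' ∈ A, a < a' →
      uA a' r' - uA a r' < uA a' r - uA a r := by
    intro r r' hr hr' hsucc a ha a' ha' hlt
    have hpos := hRI.2 r hr r' hr' hsucc
    have hmono : StrictMonoOn (fun x => uA x r - uA x r') A := by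
      apply strictMonoOn_of_deriv_pos (convex_Icc _ _)
      · exact ((huA.comp (continuous_id.prodMk continuous_const)).sub
          (huA.comp (continuous_id.prodMk continuous_const))).continuousOn
      · intro x hx
        rw [interior_Icc] at hx
        have hd : HasDerivAt (fun x => uA x r - uA x r') (d1 x r - d1 x r') x :=
          (hd1 x r).sub (hd1 x r')
        rw [hd.deriv]
        exact sub_pos.mpr (hpos x (Set.Ioo_subset_Icc_self hx))
    have := hmono ha ha' hlt
    dsimp at this
    linarith
  -- monotone comparative statics for dual replies
  have hMCS : ∀ a ∈ A, ∀ a' ∈ A, a < a' → ∀ r ∈ dualReplies uA R M a,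
      ∀ r' ∈ dualReplies uA R M a', succeqAI d1 A r' r := by
    intro a ha a' ha' hlt r hrd r' hrd'
    obtain ⟨hrR, hre⟩ := hrd
    obtain ⟨hr'R, hr'e⟩ := hrd'
    by_contra hnot
    have hsucc : succAI d1 A r r' := by
      refine ⟨?_, hnot⟩
      rcases hRI.1 r hrR r' hr'R with h | h
      · exact h
      · exact absurd h hnot
    have h1 : uA a r' - Vfun uA M r' ≤ uA a r - Vfun uA M r := by
      rw [hre]; exact hTub a r' hr'R
    have h2 : uA a' r - Vfun uA M r ≤ uA a' r' - Vfun uA M r' := by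
      rw [hr'e]; exact hTub a' r hrR
    have := hSC r r' hrR hr'R hsucc a ha a' ha' hlt
    linarith
  -- choose a rational in the derivative gap at each bad point
  have hex : ∀ a ∈ S, ∃ q : ℚ, ∃ r1 ∈ dualReplies uA R M a, ∃ r2 ∈ dualReplies uA R M a,
      succAI d1 A r1 r2 ∧ d1 a0 r2 < (q : ℝ) ∧ (q : ℝ) < d1 a0 r1 := by
    rintro a ⟨haA, r1, hr1, r2, hr2, hsucc⟩
    have hlt := hRI.2 r1 hr1.1 r2 hr2.1 hsucc a0 ha0A
    obtain ⟨q, hq1, hq2⟩ := exists_rat_btwn hlt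
    exact ⟨q, r1, hr1, r2, hr2, hsucc, hq1, hq2⟩
  set F : ℝ → ℚ := fun a => if h : a ∈ S then (hex a h).choose else 0 with hFdef
  have hFspec : ∀ a (h : a ∈ S), ∃ r1 ∈ dualReplies uA R M a, ∃ r2 ∈ dualReplies uA R M a,
      succAI d1 A r1 r2 ∧ d1 a0 r2 < (F a : ℝ) ∧ (F a : ℝ) < d1 a0 r1 := by
    intro a h
    simp only [hFdef, dif_pos h]
    exact (hex a h).choose_spec
  have hinj : Set.InjOn F S := by
    have key : ∀ a ∈ S, ∀ b ∈ S, a < b → (F a : ℝ) < (F b : ℝ) := by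
      intro a ha b hb hab
      obtain ⟨r1, hr1, r2, hr2, hsucc, hq1, hq2⟩ := hFspec a ha
      obtain ⟨s1, hs1, s2, hs2, hsucc', hp1, hp2⟩ := hFspec b hb
      have hle : d1 a0 r1 ≤ d1 a0 s2 := hMCS a ha.1 b hb.1 hab r1 hr1 s2 hs2 a0 ha0A
      linarith
    intro a ha b hb hFab
    by_contra hne
    rcases lt_or_gt_of_ne hne with h | h
    · exact absurd hFab (ne_of_lt (by exact_mod_cast key a ha b hb h))
    · exact absurd hFab.symm (ne_of_lt (by exact_mod_cast key b hb a ha h))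
  exact Set.countable_of_injective_of_countable_image hinj (Set.to_countable _)
end

section
/- Let M be a contract, a ∈ A, and r₁, r₂ ∈ R(a;M) with r₂ ≻_AI r₁. Under Assumption 1 (ranked incentives), every r ∈ R with r₂ ≻_AI r and r ≻_AI r₁ also belongs to R(a;M); i.e. the set of dual replies R(a;M) is convex with respect to the order of agent incentives. -/
open MeasureTheory Set

/-- Under ranked incentives, the set of dual replies `R(a;M)` is convex with
respect to the order of agent incentives: if `r₁, r₂ ∈ R(a;M)` with `r₂ ≻_AI r₁`, then every
`r ∈ R` with `r₂ ≻_AI r ≻_AI r₁` also belongs to `R(a;M)`. -/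
theorem stmt7 (a0 abar rlo rhi : ℝ) (hA : a0 < abar) (hR : rlo < rhi)
    (uA : ℝ → ℝ → ℝ) (huA : Continuous fun p : ℝ × ℝ => uA p.1 p.2)
    (d1 : ℝ → ℝ → ℝ)
    (hd1 : ∀ a r : ℝ, HasDerivAt (fun x => uA x r) (d1 a r) a)
    (hd1c : Continuous fun p : ℝ × ℝ => d1 p.1 p.2)
    (hRI : RankedIncentives d1 (Set.Icc a0 abar) (Set.Icc rlo rhi))
    (M : Set (ℝ × ℝ)) (hM : IsContract a0 abar M)
    (a : ℝ) (ha : a ∈ Set.Icc a0 abar)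
    (r1 r2 : ℝ) (hr1 : r1 ∈ dualReplies uA (Set.Icc rlo rhi) M a)
    (hr2 : r2 ∈ dualReplies uA (Set.Icc rlo rhi) M a)
    (h21 : succAI d1 (Set.Icc a0 abar) r2 r1)
    (r : ℝ) (hrR : r ∈ Set.Icc rlo rhi)
    (h2r : succAI d1 (Set.Icc a0 abar) r2 r)
    (hr1' : succAI d1 (Set.Icc a0 abar) r r1) :
    r ∈ dualReplies uA (Set.Icc rlo rhi) M a := by
  obtain ⟨⟨p0, hp0⟩, hMc, hMsub⟩ := hM
  obtain ⟨hr1R, hr1eq⟩ := hr1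
  obtain ⟨hr2R, hr2eq⟩ := hr2
  have hcA : ∀ r' : ℝ, Continuous fun x => d1 x r' := fun r' =>
    hd1c.comp (continuous_id.prodMk continuous_const)
  have hcu : ∀ b : ℝ, Continuous fun r' => uA b r' := fun b =>
    huA.comp (continuous_const.prodMk continuous_id)
  have hint : ∀ (c d r' : ℝ), uA d r' - uA c r' = ∫ x in c..d, d1 x r' := by
    intro c d r'
    rw [intervalIntegral.integral_eq_sub_of_hasDerivAt (fun x _ => hd1 x r')
      ((hcA r').intervalIntegrable c d)]
  have hVbdd : ∀ r' : ℝ, BddAbove ((fun p : ℝ × ℝ => uA p.1 r' - p.2) '' M) := by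
    intro r'
    exact (hMc.image ((huA.comp (continuous_fst.prodMk continuous_const)).sub
      continuous_snd)).bddAbove
  have hVge : ∀ r' : ℝ, ∀ p ∈ M, uA p.1 r' - p.2 ≤ Vfun uA M r' := fun r' p hp =>
    le_csSup (hVbdd r') ⟨p, hp, rfl⟩
  set T := Tfun uA (Set.Icc rlo rhi) M a with hT
  have hkey1 : ∀ p ∈ M, T ≤ uA a r1 - uA p.1 r1 + p.2 := by
    intro p hp
    have := hVge r1 p hp
    linarith [hr1eq]
  have hkey2 : ∀ p ∈ M, T ≤ uA a r2 - uA p.1 r2 + p.2 := by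
    intro p hp
    have := hVge r2 p hp
    linarith [hr2eq]
  have hmain : ∀ p ∈ M, uA p.1 r - p.2 ≤ uA a r - T := by
    intro p hp
    have hpA : p.1 ∈ Set.Icc a0 abar := (hMsub hp).1
    rcases le_total p.1 a with h | h
    · have hmono : (∫ x in p.1..a, d1 x r1) ≤ ∫ x in p.1..a, d1 x r := by
        apply intervalIntegral.integral_mono_on h ((hcA r1).intervalIntegrable _ _)
          ((hcA r).intervalIntegrable _ _)
        intro x hx
        exact hr1'.1 x ⟨le_trans hpA.1 hx.1, le_trans hx.2 ha.2⟩
      have e1 := hint p.1 a r1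
      have e2 := hint p.1 a r
      have := hkey1 p hp
      linarith
    · have hmono : (∫ x in a..p.1, d1 x r) ≤ ∫ x in a..p.1, d1 x r2 := by
        apply intervalIntegral.integral_mono_on h ((hcA r).intervalIntegrable _ _)
          ((hcA r2).intervalIntegrable _ _)
        intro x hx
        exact h2r.1 x ⟨le_trans ha.1 hx.1, le_trans hx.2 hpA.2⟩
      have e1 := hint a p.1 r2
      have e2 := hint a p.1 r
      have := hkey2 p hp
      linarith
  have hVle : Vfun uA M r ≤ uA a r - T :=
    csSup_le (Set.Nonempty.image _ ⟨p0, hp0⟩) (by rintro y ⟨p, hp, rfl⟩; exact hmain p hp)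
  have hTbdd : BddAbove ((fun r' => uA a r' - Vfun uA M r') '' Set.Icc rlo rhi) := by
    obtain ⟨C, hC⟩ := (isCompact_Icc.image
      (((hcu a).sub ((hcu p0.1).sub continuous_const)) :
        Continuous fun r' => uA a r' - (uA p0.1 r' - p0.2))).bddAbove
    refine ⟨C, ?_⟩
    rintro y ⟨r', hr', rfl⟩
    have h1 : uA p0.1 r' - p0.2 ≤ Vfun uA M r' := hVge r' p0 hp0
    have h2 : uA a r' - (uA p0.1 r' - p0.2) ≤ C := hC ⟨r', hr', rfl⟩
    show uA a r' - Vfun uA M r' ≤ C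
    linarith
  have hle : uA a r - Vfun uA M r ≤ T := le_csSup hTbdd ⟨r, hrR, rfl⟩
  exact ⟨hrR, le_antisymm hle (by linarith)⟩
end

section
/- Let M be a contract and (a,t) ∈ M a critical plan, i.e. V(r₀;M) = u_A(a,r₀) − t for some r₀ ∈ R. Under Assumption 1 (ranked incentives), if r(a) ∈ R(a;M), then V(r(a);M) = u_A(a,r(a)) − t; consequently the pure profile in which the agent chooses (a,t) and the outsider chooses r(a) is a Nash equilibrium of the game induced by M. -/
open MeasureTheory Set

/-- The (topological) support of a measure: points all of whose open neighborhoods have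
positive measure. -/
def mSupp {X : Type*} [TopologicalSpace X] [MeasurableSpace X]
    (μ : Measure X) : Set X :=
  {x | ∀ U : Set X, IsOpen U → x ∈ U → 0 < μ U}

/-- A (mixed-strategy) Nash equilibrium of the game induced by contract `M`: a pair of Borel
probability measures, `β` on `M` and `ρ` on `R`, such that every plan in the support of `β`
maximizes the agent's expected payoff over `M` and every action in the support of `ρ`
maximizes the outsider's expected payoff over `R`. -/
def IsNash (uA uO : ℝ → ℝ → ℝ) (R : Set ℝ) (M : Set (ℝ × ℝ))
    (β : Measure (ℝ × ℝ)) (ρ : Measure ℝ) : Prop :=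
  IsProbabilityMeasure β ∧ IsProbabilityMeasure ρ ∧
  mSupp β ⊆ M ∧ mSupp ρ ⊆ R ∧
  (∀ p ∈ mSupp β, ∀ q ∈ M, (∫ r, uA q.1 r ∂ρ) - q.2 ≤ (∫ r, uA p.1 r ∂ρ) - p.2) ∧
  (∀ r ∈ mSupp ρ, ∀ r' ∈ R, (∫ p : ℝ × ℝ, uO p.1 r' ∂β) ≤ (∫ p : ℝ × ℝ, uO p.1 r ∂β))


lemma mSupp_dirac {X : Type*} [TopologicalSpace X] [MeasurableSpace X]
    [OpensMeasurableSpace X] [T1Space X] (x : X) :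
    mSupp (Measure.dirac x) = {x} := by
  ext y
  constructor
  · intro hy
    by_contra hne
    have hU : IsOpen ({x}ᶜ : Set X) := isOpen_compl_singleton
    have := hy _ hU (by simpa using hne)
    rw [Measure.dirac_apply' _ hU.measurableSet] at this
    simp at this
  · rintro rfl U hU hxU
    rw [Measure.dirac_apply' _ hU.measurableSet]
    simp [hxU]

/-- Under ranked incentives, if `(a,t) ∈ M` is a critical plan (i.e. attains
`V(r₀;M)` for some `r₀ ∈ R`) and the outsider's best reply `r(a)` is a dual reply at `a`,
then `(a,t)` attains `V(r(a);M)` and the pure profile `((a,t), r(a))` is a Nash equilibrium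
of the game induced by `M`. -/
theorem stmt8 (a0 abar rlo rhi : ℝ) (hA : a0 < abar) (hR : rlo < rhi)
    (uA uO : ℝ → ℝ → ℝ)
    (huA : Continuous fun p : ℝ × ℝ => uA p.1 p.2)
    (huO : Continuous fun p : ℝ × ℝ => uO p.1 p.2)
    (d1 : ℝ → ℝ → ℝ)
    (hd1 : ∀ a r : ℝ, HasDerivAt (fun x => uA x r) (d1 a r) a)
    (hd1c : Continuous fun p : ℝ × ℝ => d1 p.1 p.2)
    (hRI : RankedIncentives d1 (Set.Icc a0 abar) (Set.Icc rlo rhi))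
    (hconc : ∀ a ∈ Set.Icc a0 abar, StrictConcaveOn ℝ (Set.Icc rlo rhi) (fun r => uO a r))
    (rBR : ℝ → ℝ)
    (hrBR : ∀ a ∈ Set.Icc a0 abar, rBR a ∈ Set.Icc rlo rhi ∧
      ∀ r' ∈ Set.Icc rlo rhi, r' ≠ rBR a → uO a r' < uO a (rBR a))
    (M : Set (ℝ × ℝ)) (hM : IsContract a0 abar M)
    (a t : ℝ) (hat : (a, t) ∈ M)
    (r0 : ℝ) (hr0 : r0 ∈ Set.Icc rlo rhi)
    (hcrit : Vfun uA M r0 = uA a r0 - t)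
    (hbr : rBR a ∈ dualReplies uA (Set.Icc rlo rhi) M a) :
    Vfun uA M (rBR a) = uA a (rBR a) - t ∧
    IsNash uA uO (Set.Icc rlo rhi) M (Measure.dirac (a, t)) (Measure.dirac (rBR a)) := by
  obtain ⟨hMne, hMcomp, hMsub⟩ := hM
  have haA : a ∈ Set.Icc a0 abar := (hMsub hat).1
  obtain ⟨hrBRmem, hrBRmax⟩ := hrBR a haA
  have hbdd : ∀ r : ℝ, BddAbove ((fun p : ℝ × ℝ => uA p.1 r - p.2) '' M) := by
    intro r
    exact (hMcomp.image_of_continuousOn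
      (((huA.comp (continuous_fst.prodMk continuous_const)).sub continuous_snd).continuousOn)).bddAbove
  have hVle : ∀ r : ℝ, ∀ q ∈ M, uA q.1 r - q.2 ≤ Vfun uA M r := fun r q hq =>
    le_csSup (hbdd r) ⟨q, hq, rfl⟩
  have hTbdd : BddAbove ((fun r => uA a r - Vfun uA M r) '' (Set.Icc rlo rhi)) := by
    refine ⟨t, ?_⟩
    rintro x ⟨r, hr, rfl⟩
    have := hVle r (a, t) hat
    simp only at this ⊢
    linarith
  have hT : uA a r0 - Vfun uA M r0 ≤ Tfun uA (Set.Icc rlo rhi) M a :=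
    le_csSup hTbdd ⟨r0, hr0, rfl⟩
  obtain ⟨hbr1, hbr2⟩ := hbr
  have hV1 : Vfun uA M (rBR a) = uA a (rBR a) - t := by
    have h1 : uA a (rBR a) - t ≤ Vfun uA M (rBR a) := hVle _ (a, t) hat
    have h2 : t ≤ uA a (rBR a) - Vfun uA M (rBR a) := by rw [hbr2]; linarith
    linarith
  refine ⟨hV1, ?_, ?_, ?_, ?_, ?_, ?_⟩
  · infer_instance
  · infer_instance
  · rw [mSupp_dirac]; exact Set.singleton_subset_iff.2 hat
  · rw [mSupp_dirac]; exact Set.singleton_subset_iff.2 hrBRmem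
  · intro p hp q hq
    rw [mSupp_dirac] at hp
    rcases hp with rfl
    rw [integral_dirac, integral_dirac]
    have := hVle (rBR a) q hq
    simp only
    linarith
  · intro r hr r' hr'
    rw [mSupp_dirac] at hr
    rcases hr with rfl
    rw [integral_dirac, integral_dirac]
    by_cases h : r' = rBR a
    · subst h; exact le_rfl
    · exact (hrBRmax r' hr' h).le
end

section
/- Let M be a contract, u_P : ℝ × ℝ → ℝ continuous, and (β, ρ) a Nash equilibrium of the game induced by M in which ρ is the point mass at some r₀ ∈ R. Then every (a,t) in the support of β satisfies t = T(a;M), and hence the principal's equilibrium payoff satisfies ∫_M (u_P(a,r₀) + t) dβ(a,t) = ∫_M (u_P(a,r₀) + T(a;M)) dβ(a,t). -/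
/-
The agent's equilibrium condition against the point mass at `r₀` says that each plan `(a,t)`
in the support of `β` attains `V(r₀;M) = u_A(a,r₀) - t`, while `V(r;M) ≥ u_A(a,r) - t` holds for
every `r`. Hence `r ↦ u_A(a,r) - V(r;M)` is bounded by `t` on `R` and attains `t` at `r₀`, so
`T(a;M) = t`. The support of a measure on `ℝ × ℝ` is conull, which gives the payoff identity.
-/

open MeasureTheory Set

lemma mSupp_eq_support {X : Type*} [TopologicalSpace X] [MeasurableSpace X] (μ : Measure X) :
    mSupp μ = μ.support := by
  ext x
  simp only [mSupp, Measure.support_eq_forall_isOpen, mem_ofPred_eq]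
  exact forall_congr' fun U => forall_comm

lemma ae_mem_mSupp {X : Type*} [TopologicalSpace X] [HereditarilyLindelofSpace X]
    [MeasurableSpace X] (μ : Measure X) : ∀ᵐ x ∂μ, x ∈ mSupp μ := by
  rw [mSupp_eq_support]
  exact Measure.support_mem_ae

section Transfers

variable {uA : ℝ → ℝ → ℝ} {M : Set (ℝ × ℝ)} {R : Set ℝ}

lemma le_Vfun_s9 (hM : IsCompact M) {r : ℝ} (hr : Continuous fun a => uA a r)
    {q : ℝ × ℝ} (hq : q ∈ M) : uA q.1 r - q.2 ≤ Vfun uA M r :=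
  le_csSup (hM.image ((hr.comp continuous_fst).sub continuous_snd)).bddAbove ⟨q, hq, rfl⟩

lemma IsNash.Vfun_eq_of_mem_mSupp {uO : ℝ → ℝ → ℝ} {β : Measure (ℝ × ℝ)} {r₀ : ℝ}
    (hNash : IsNash uA uO R M β (Measure.dirac r₀)) {p : ℝ × ℝ} (hp : p ∈ mSupp β) :
    Vfun uA M r₀ = uA p.1 r₀ - p.2 := by
  obtain ⟨-, -, hβM, -, hAgent, -⟩ := hNash
  refine IsGreatest.csSup_eq ⟨⟨p, hβM hp, rfl⟩, ?_⟩
  rintro _ ⟨q, hq, rfl⟩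
  simpa using hAgent p hp q hq

lemma Tfun_eq_of_Vfun_eq {p : ℝ × ℝ} {r₀ : ℝ} (hr₀ : r₀ ∈ R)
    (hV₀ : Vfun uA M r₀ = uA p.1 r₀ - p.2) (hV : ∀ r ∈ R, uA p.1 r - p.2 ≤ Vfun uA M r) :
    Tfun uA R M p.1 = p.2 := by
  refine IsGreatest.csSup_eq ⟨⟨r₀, hr₀, by simp [hV₀]⟩, ?_⟩
  rintro _ ⟨r, hr, rfl⟩
  linarith [hV r hr]

end Transfers

theorem stmt9_general (a0 abar rlo rhi : ℝ)
    (uA uO uP : ℝ → ℝ → ℝ)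
    (huA : Continuous fun p : ℝ × ℝ => uA p.1 p.2)
    (M : Set (ℝ × ℝ)) (hM : IsContract a0 abar M)
    (β : Measure (ℝ × ℝ)) (ρ : Measure ℝ)
    (r0 : ℝ) (hr0 : r0 ∈ Set.Icc rlo rhi)
    (hNash : IsNash uA uO (Set.Icc rlo rhi) M β ρ)
    (hρ : ρ = Measure.dirac r0) :
    (∀ p ∈ mSupp β, p.2 = Tfun uA (Set.Icc rlo rhi) M p.1) ∧
    (∫ p : ℝ × ℝ, (uP p.1 r0 + p.2) ∂β) =
      (∫ p : ℝ × ℝ, (uP p.1 r0 + Tfun uA (Set.Icc rlo rhi) M p.1) ∂β) := by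
  subst hρ
  have hβM : mSupp β ⊆ M := hNash.2.2.1
  have huA_left (r : ℝ) : Continuous fun a => uA a r := huA.comp (.prodMk_left r)
  have hTransfer : ∀ p ∈ mSupp β, p.2 = Tfun uA (Set.Icc rlo rhi) M p.1 := fun p hp =>
    (Tfun_eq_of_Vfun_eq hr0 (hNash.Vfun_eq_of_mem_mSupp hp) fun r _ =>
      le_Vfun_s9 hM.2.1 (huA_left r) (hβM hp)).symm
  refine ⟨hTransfer, integral_congr_ae ?_⟩
  filter_upwards [ae_mem_mSupp β] with p hp
  rw [hTransfer p hp]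

/-- In every Nash equilibrium `(β, δ_{r₀})` of the game induced by `M`, every plan
`(a,t)` in the support of `β` satisfies `t = T(a;M)`; consequently the principal's equilibrium
payoff equals the same expression with on-path transfers replaced by dual transfers. -/
theorem stmt9 (a0 abar rlo rhi : ℝ) (hA : a0 < abar) (hR : rlo < rhi)
    (uA uO uP : ℝ → ℝ → ℝ)
    (huA : Continuous fun p : ℝ × ℝ => uA p.1 p.2)
    (huO : Continuous fun p : ℝ × ℝ => uO p.1 p.2)
    (huP : Continuous fun p : ℝ × ℝ => uP p.1 p.2)
    (hconc : ∀ a ∈ Set.Icc a0 abar, StrictConcaveOn ℝ (Set.Icc rlo rhi) (fun r => uO a r))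
    (M : Set (ℝ × ℝ)) (hM : IsContract a0 abar M)
    (β : Measure (ℝ × ℝ)) (ρ : Measure ℝ)
    (r0 : ℝ) (hr0 : r0 ∈ Set.Icc rlo rhi)
    (hNash : IsNash uA uO (Set.Icc rlo rhi) M β ρ)
    (hρ : ρ = Measure.dirac r0) :
    (∀ p ∈ mSupp β, p.2 = Tfun uA (Set.Icc rlo rhi) M p.1) ∧
    (∫ p : ℝ × ℝ, (uP p.1 r0 + p.2) ∂β) =
      (∫ p : ℝ × ℝ, (uP p.1 r0 + Tfun uA (Set.Icc rlo rhi) M p.1) ∂β) :=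
  stmt9_general a0 abar rlo rhi uA uO uP huA M hM β ρ r0 hr0 hNash hρ
end

section
/- Let M be a contract and (β, ρ) a Nash equilibrium of the game induced by M in which ρ is the point mass at some r₀ ∈ R. Let ā_β := max{a : (a,t) ∈ supp β}. Under Assumption 1 (ranked incentives): r₀ ∈ R(ā_β;M), and for every a ∈ A with a < ā_β and every r' ∈ R(a;M), r₀ ≽_AI r'. -/
open MeasureTheory Set

/-- In a Nash equilibrium `(β, δ_{r₀})`, with `ā_β` the maximal on-path action,
`r₀` is a dual reply at `ā_β`, and at every action `a < ā_β` every dual reply is dominated by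
`r₀` in the order of agent incentives. -/
theorem stmt10 (a0 abar rlo rhi : ℝ) (hA : a0 < abar) (hR : rlo < rhi)
    (uA uO : ℝ → ℝ → ℝ)
    (huA : Continuous fun p : ℝ × ℝ => uA p.1 p.2)
    (huO : Continuous fun p : ℝ × ℝ => uO p.1 p.2)
    (d1 : ℝ → ℝ → ℝ)
    (hd1 : ∀ a r : ℝ, HasDerivAt (fun x => uA x r) (d1 a r) a)
    (hd1c : Continuous fun p : ℝ × ℝ => d1 p.1 p.2)
    (hRI : RankedIncentives d1 (Set.Icc a0 abar) (Set.Icc rlo rhi))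
    (hconc : ∀ a ∈ Set.Icc a0 abar, StrictConcaveOn ℝ (Set.Icc rlo rhi) (fun r => uO a r))
    (M : Set (ℝ × ℝ)) (hM : IsContract a0 abar M)
    (β : Measure (ℝ × ℝ)) (ρ : Measure ℝ)
    (r0 : ℝ) (hr0 : r0 ∈ Set.Icc rlo rhi)
    (hNash : IsNash uA uO (Set.Icc rlo rhi) M β ρ)
    (hρ : ρ = Measure.dirac r0) :
    r0 ∈ dualReplies uA (Set.Icc rlo rhi) M (sSup (Prod.fst '' mSupp β)) ∧
    (∀ a ∈ Set.Icc a0 abar, a < sSup (Prod.fst '' mSupp β) →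
      ∀ r' ∈ dualReplies uA (Set.Icc rlo rhi) M a,
        succeqAI d1 (Set.Icc a0 abar) r0 r') := by

  classical
  obtain ⟨hMne, hMcomp, hMsub⟩ := hM
  obtain ⟨hβprob, hρprob, hβsupp, hρsupp, hagent, hout⟩ := hNash
  have hint : ∀ a : ℝ, (∫ r, uA a r ∂ρ) = uA a r0 := by
    intro a; rw [hρ]; exact integral_dirac _ _
  have hopt : ∀ p ∈ mSupp β, ∀ q ∈ M, uA q.1 r0 - q.2 ≤ uA p.1 r0 - p.2 := by
    intro p hp q hq
    have := hagent p hp q hq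
    rwa [hint, hint] at this
  -- the support is closed
  have hclosed : IsClosed (mSupp β) := by
    rw [← isOpen_compl_iff, isOpen_iff_forall_mem_open]
    intro x hx
    simp only [mSupp, mem_compl_iff, mem_setOf_eq, not_forall] at hx
    obtain ⟨U, hU, hxU, hμU⟩ := hx
    refine ⟨U, ?_, hU, hxU⟩
    intro y hy hmem
    exact hμU (hmem U hU hy)
  -- the support is nonempty
  have hne : (mSupp β).Nonempty := by
    by_contra hcon
    rw [not_nonempty_iff_eq_empty] at hcon
    have h0 : β (univ : Set (ℝ × ℝ)) = 0 := by
      apply measure_null_of_locally_null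
      intro x _
      have hx : x ∉ mSupp β := by rw [hcon]; exact notMem_empty x
      simp only [mSupp, mem_setOf_eq, not_forall] at hx
      obtain ⟨U, hU, hxU, hμU⟩ := hx
      refine ⟨U, ?_, le_antisymm (not_lt.1 hμU) bot_le⟩
      rw [nhdsWithin_univ]
      exact hU.mem_nhds hxU
    have := hβprob.measure_univ
    rw [h0] at this
    exact zero_ne_one this
  have hsuppcomp : IsCompact (mSupp β) := hMcomp.of_isClosed_subset hclosed hβsupp
  set K : Set ℝ := Prod.fst '' mSupp β with hK
  have hKne : K.Nonempty := hne.image _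
  have hKcomp : IsCompact K := hsuppcomp.image continuous_fst
  have habK : sSup K ∈ K := hKcomp.sSup_mem hKne
  obtain ⟨pstar, hps, hp1⟩ := habK
  have hpsM : pstar ∈ M := hβsupp hps
  -- abbreviations
  set ab : ℝ := sSup K with hab
  have habA : ab ∈ Set.Icc a0 abar := by
    have := hMsub hpsM
    rw [mem_prod] at this
    rw [← hp1]; exact this.1
  -- V facts
  have huAc : ∀ r : ℝ, Continuous (fun p : ℝ × ℝ => uA p.1 r - p.2) := by
    intro r
    exact (huA.comp (continuous_fst.prodMk continuous_const)).sub continuous_snd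
  have hVbdd : ∀ r : ℝ, BddAbove ((fun p : ℝ × ℝ => uA p.1 r - p.2) '' M) := fun r =>
    hMcomp.bddAbove_image (huAc r).continuousOn
  have hVge : ∀ r : ℝ, ∀ q ∈ M, uA q.1 r - q.2 ≤ Vfun uA M r := fun r q hq =>
    le_csSup (hVbdd r) ⟨q, hq, rfl⟩
  have hV0 : Vfun uA M r0 = uA ab r0 - pstar.2 := by
    apply le_antisymm
    · apply csSup_le (hMne.image _)
      rintro _ ⟨q, hq, rfl⟩
      have := hopt pstar hps q hq
      rw [hp1] at this; exact this
    · have := hVge r0 pstar hpsM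
      rw [hp1] at this; exact this
  -- boundedness of the T-defining set
  have hTbdd : ∀ a : ℝ, BddAbove ((fun r => uA a r - Vfun uA M r) '' Set.Icc rlo rhi) := by
    intro a
    obtain ⟨C, hC⟩ := isCompact_Icc.bddAbove_image
      (f := fun r : ℝ => uA a r - uA ab r)
      (((huA.comp (continuous_const.prodMk continuous_id)).sub
        (huA.comp (continuous_const.prodMk continuous_id))).continuousOn)
    refine ⟨C + pstar.2, ?_⟩
    rintro _ ⟨r, hr, rfl⟩
    show uA a r - Vfun uA M r ≤ C + pstar.2
    have h1 : uA ab r - pstar.2 ≤ Vfun uA M r := by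
      have := hVge r pstar hpsM; rwa [hp1] at this
    have h2 : uA a r - uA ab r ≤ C := hC ⟨r, hr, rfl⟩
    linarith
  -- Part 1
  have hTab : Tfun uA (Set.Icc rlo rhi) M ab = pstar.2 := by
    apply le_antisymm
    · refine csSup_le ⟨uA ab r0 - Vfun uA M r0, ⟨r0, hr0, rfl⟩⟩ ?_
      rintro _ ⟨r, hr, rfl⟩
      show uA ab r - Vfun uA M r ≤ pstar.2
      have := hVge r pstar hpsM
      rw [hp1] at this; linarith
    · refine le_csSup (hTbdd ab) ⟨r0, hr0, ?_⟩
      show uA ab r0 - Vfun uA M r0 = pstar.2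
      rw [hV0]; ring
  have part1 : r0 ∈ dualReplies uA (Set.Icc rlo rhi) M ab := by
    refine ⟨hr0, ?_⟩
    rw [hV0, hTab]; ring
  refine ⟨part1, ?_⟩
  -- Part 2
  intro a ha halt r' hr'
  obtain ⟨hr'R, hr'eq⟩ := hr'
  rcases hRI.1 r0 hr0 r' hr'R with h | h
  · exact h
  · by_contra hcon
    have hstrict : ∀ x ∈ Set.Icc a0 abar, d1 x r0 < d1 x r' :=
      hRI.2 r' hr'R r0 hr0 ⟨h, hcon⟩
    have hg : ∀ x : ℝ, HasDerivAt (fun y => uA y r' - uA y r0) (d1 x r' - d1 x r0) x :=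
      fun x => (hd1 x r').sub (hd1 x r0)
    have hmono : StrictMonoOn (fun y => uA y r' - uA y r0) (Set.Icc a0 abar) := by
      apply strictMonoOn_of_deriv_pos (convex_Icc a0 abar)
      · exact fun x _ => (hg x).continuousAt.continuousWithinAt
      · intro x hx
        rw [(hg x).deriv]
        have := hstrict x (interior_subset hx)
        linarith
    have hlt : uA a r' - uA a r0 < uA ab r' - uA ab r0 := hmono ha habA halt
    -- optimality of r' at a:
    have h1 : uA a r0 - Vfun uA M r0 ≤ uA a r' - Vfun uA M r' := by
      rw [hr'eq]
      exact le_csSup (hTbdd a) ⟨r0, hr0, rfl⟩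
    have h2 : uA ab r' - pstar.2 ≤ Vfun uA M r' := by
      have := hVge r' pstar hpsM; rwa [hp1] at this
    rw [hV0] at h1
    linarith
end

section
/- Let M be a contract containing a critical plan (a',t'), i.e. V(r₀;M) = u_A(a',r₀) − t' for some r₀ ∈ R, such that some ρ* ∈ R(a';M) satisfies ρ* ≻_AI r(a'). Then the game induced by M has a Nash equilibrium (β, ρ) in which every (a,t) in the support of β satisfies a ≤ a'. -/
open MeasureTheory Set

/-- Assumption 2 (intuitive mixture): for all `r₁, r₂ ∈ R` and every `r` between them,
either `r ≽_AI r₁` or `r ≽_AI r₂`. -/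
def IntuitiveMixture (d1 : ℝ → ℝ → ℝ) (A R : Set ℝ) : Prop :=
  ∀ r1 ∈ R, ∀ r2 ∈ R, ∀ r, min r1 r2 ≤ r → r ≤ max r1 r2 →
    succeqAI d1 A r r1 ∨ succeqAI d1 A r r2

/-!
Write `B(r)` for the agent's best replies in `M` to `r` and `φ = ∂₁u_A(a₀, ·)`, which represents
`≽_AI` on `R` and is quasiconcave by intuitive mixture. The critical plan is a best reply to `ρ*`,
and by single crossing every best reply to an `r` with `φ r < φ ρ*` has action at most `a'`.
The superlevel set `{φ ≥ φ ρ*}` is an interval containing `ρ*` but not `r(a')`; at its endpoint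
`σ` facing `r(a')` the critical plan is still a best reply. On the segment from `σ` to the end of
`R` beyond `r(a')`, the correspondence `r ↦ {r(a) | (a, t) ∈ B(r), a ≤ a'}` has a compact graph
and nonempty values, and it lies below the diagonal at one end and above it at the other, so by
connectedness some `r*` has best replies `p₁, p₂` with `r(p₁.1) ≤ r* ≤ r(p₂.1)`. Since `u_O` is
concave in `r`, a mixture of `p₁` and `p₂` makes `r*` a best reply of the outsider.
-/

open Topology
open scoped ENNReal

lemma isClosed_setOf_isMaxOn {Z Y : Type*} [TopologicalSpace Z] {F : Z → Y → ℝ} {g : Z → Y}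
    {L : Set Y} (hF : ∀ y ∈ L, Continuous fun z => F z y) (hg : Continuous fun z => F z (g z)) :
    IsClosed {z | IsMaxOn (F z) L (g z)} := by
  simp only [isMaxOn_iff, Set.ofPred_forall]
  exact isClosed_biInter fun y hy => isClosed_le (hF y hy) hg

lemma ConcaveOn.isMaxOn_of_hasDerivAt_eq_zero {s : Set ℝ} {f : ℝ → ℝ} {x : ℝ}
    (hf : ConcaveOn ℝ s f) (hx : x ∈ s) (hf' : HasDerivAt f 0 x) : IsMaxOn f s x := by
  refine isMaxOn_iff.2 fun y hy => ?_
  rcases lt_trichotomy x y with h | rfl | h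
  · have := hf.slope_le_of_hasDerivAt hx hy h hf'
    rw [slope_def_field, div_le_iff₀ (sub_pos.2 h), zero_mul] at this
    linarith
  · exact le_rfl
  · have := hf.le_slope_of_hasDerivAt hy hx h hf'
    rw [slope_def_field, le_div_iff₀ (sub_pos.2 h), zero_mul] at this
    linarith

/-- At `x` the first function is nonincreasing and the second nondecreasing, so some convex
combination of them is stationary at `x`. -/
lemma exists_isMaxOn_convexCombination {s : Set ℝ} {f₁ f₂ : ℝ → ℝ} {d₁ d₂ x y₁ y₂ : ℝ}
    (hf₁ : ConcaveOn ℝ s f₁) (hf₂ : ConcaveOn ℝ s f₂)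
    (hd₁ : HasDerivAt f₁ d₁ x) (hd₂ : HasDerivAt f₂ d₂ x)
    (hx : x ∈ s) (hy₁ : y₁ ∈ s) (hy₂ : y₂ ∈ s) (hmax₁ : IsMaxOn f₁ s y₁) (hmax₂ : IsMaxOn f₂ s y₂)
    (h₁ : y₁ ≤ x) (h₂ : x ≤ y₂) :
    ∃ w ∈ Icc (0 : ℝ) 1, IsMaxOn (fun r => (1 - w) * f₁ r + w * f₂ r) s x := by
  rcases h₁.eq_or_lt with rfl | h₁
  · exact ⟨0, left_mem_Icc.2 zero_le_one, by simpa using hmax₁⟩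
  rcases h₂.eq_or_lt with rfl | h₂
  · exact ⟨1, right_mem_Icc.2 zero_le_one, by simpa using hmax₂⟩
  have hd₁_nonpos : d₁ ≤ 0 := by
    have := hf₁.le_slope_of_hasDerivAt hy₁ hx h₁ hd₁
    rw [slope_def_field, le_div_iff₀ (sub_pos.2 h₁)] at this
    nlinarith [isMaxOn_iff.1 hmax₁ x hx]
  have hd₂_nonneg : 0 ≤ d₂ := by
    have := hf₂.slope_le_of_hasDerivAt hx hy₂ h₂ hd₂
    rw [slope_def_field, div_le_iff₀ (sub_pos.2 h₂)] at this
    nlinarith [isMaxOn_iff.1 hmax₂ x hx]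
  obtain ⟨w, hw, hw_zero⟩ : ∃ w ∈ Icc (0 : ℝ) 1, (1 - w) * d₁ + w * d₂ = 0 :=
    intermediate_value_Icc zero_le_one (by fun_prop) (by simpa using ⟨hd₁_nonpos, hd₂_nonneg⟩)
  refine ⟨w, hw, ConcaveOn.isMaxOn_of_hasDerivAt_eq_zero ?_ hx ?_⟩
  · exact (hf₁.smul (sub_nonneg.2 hw.2)).add (hf₂.smul hw.1)
  · exact hw_zero ▸ (hd₁.const_mul _).add (hd₂.const_mul _)

lemma continuous_of_hasDerivAt_fst {f d : ℝ → ℝ → ℝ}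
    (hf : ContDiff ℝ 1 fun p : ℝ × ℝ => f p.1 p.2)
    (hd : ∀ a r, HasDerivAt (fun x => f x r) (d a r) a) (a : ℝ) : Continuous (d a) := by
  have hF := hf.differentiable one_ne_zero
  have hd_eq : (fun p : ℝ × ℝ => d p.1 p.2) =
      fun p => fderiv ℝ (fun p : ℝ × ℝ => f p.1 p.2) p (1, 0) :=
    funext fun p => (hd p.1 p.2).unique <| (hF p).hasFDerivAt.comp_hasDerivAt_of_eq p.1
      ((hasDerivAt_id p.1).prodMk (hasDerivAt_const p.1 p.2)) rfl
  have hcont : Continuous fun p : ℝ × ℝ => d p.1 p.2 :=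
    hd_eq ▸ (hf.continuous_fderiv one_ne_zero).clm_apply continuous_const
  exact hcont.comp (continuous_const.prodMk continuous_id)

lemma exists_bracket_of_isCompact {G : Set (ℝ × ℝ)} (hG : IsCompact G) {a b : ℝ} (hab : a ≤ b)
    (hfib : ∀ r ∈ Icc a b, ∃ y, (r, y) ∈ G) (ha : ∃ y, (a, y) ∈ G ∧ a ≤ y)
    (hb : ∃ y, (b, y) ∈ G ∧ y ≤ b) :
    ∃ s y₁ y₂, (s, y₁) ∈ G ∧ (s, y₂) ∈ G ∧ y₁ ≤ s ∧ s ≤ y₂ := by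
  have hclosed : ∀ t : Set (ℝ × ℝ), IsClosed t → IsClosed (Prod.fst '' (G ∩ t)) :=
    fun t ht => ((hG.inter_right ht).image continuous_fst).isClosed
  have hcover :
      Icc a b ⊆ Prod.fst '' (G ∩ {x | x.1 ≤ x.2}) ∪ Prod.fst '' (G ∩ {x | x.2 ≤ x.1}) := by
    intro r hr
    obtain ⟨y, hy⟩ := hfib r hr
    rcases le_total r y with h | h
    exacts [Or.inl ⟨(r, y), ⟨hy, h⟩, rfl⟩, Or.inr ⟨(r, y), ⟨hy, h⟩, rfl⟩]
  obtain ⟨ya, hya, hay⟩ := ha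
  obtain ⟨yb, hyb, hby⟩ := hb
  obtain ⟨s, -, ⟨⟨s, y₂⟩, ⟨h₂, hs₂⟩, rfl⟩, ⟨⟨s, y₁⟩, ⟨h₁, hs₁⟩, rfl⟩⟩ :=
    isPreconnected_closed_iff.1 isPreconnected_Icc _ _
      (hclosed _ (isClosed_le continuous_fst continuous_snd))
      (hclosed _ (isClosed_le continuous_snd continuous_fst)) hcover
      ⟨a, left_mem_Icc.2 hab, (a, ya), ⟨hya, hay⟩, rfl⟩
      ⟨b, right_mem_Icc.2 hab, (b, yb), ⟨hyb, hby⟩, rfl⟩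
  exact ⟨s, y₁, y₂, h₁, h₂, hs₁, hs₂⟩

/-- The superlevel set `{φ ≥ φ z}` is an interval containing `z` but not `x₀`; its endpoint `σ`
facing `x₀` has `φ σ = φ z`, and the fibres of `G` are nonempty on the whole side of `σ` that
contains `x₀`, up to the boundary of `[lo, hi]`. -/
lemma exists_bracket_of_quasiconcaveOn {lo hi x₀ z : ℝ} {φ : ℝ → ℝ} {G : Set (ℝ × ℝ)}
    (hφc : Continuous φ) (hφq : QuasiconcaveOn ℝ (Icc lo hi) φ)
    (hx₀ : x₀ ∈ Icc lo hi) (hz : z ∈ Icc lo hi) (hφ : φ x₀ < φ z)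
    (hG : IsCompact G) (hGR : ∀ x ∈ G, x.2 ∈ Icc lo hi)
    (hlt : ∀ r ∈ Icc lo hi, φ r < φ z → ∃ y, (r, y) ∈ G)
    (heq : ∀ r ∈ Icc lo hi, φ r = φ z → (r, x₀) ∈ G) :
    ∃ s y₁ y₂, (s, y₁) ∈ G ∧ (s, y₂) ∈ G ∧ y₁ ≤ s ∧ s ≤ y₂ := by
  wlog hx₀z : x₀ < z generalizing lo hi x₀ z φ G
  · have hzx₀ : z < x₀ := lt_of_le_of_ne (not_lt.1 hx₀z) fun h => hφ.ne (h ▸ rfl)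
    have hneg : ∀ r, -r ∈ Icc lo hi ↔ r ∈ Icc (-hi) (-lo) := fun r => by
      rw [← Set.mem_neg, Set.neg_Icc]
    have hlevel : ∀ c, {r ∈ Icc (-hi) (-lo) | c ≤ φ (-r)} = -{r ∈ Icc lo hi | c ≤ φ r} :=
      fun c => by ext r; simp only [Set.mem_neg, Set.mem_sep_iff, hneg]
    obtain ⟨s, y₁, y₂, h₁, h₂, hs₁, hs₂⟩ := this (φ := fun r => φ (-r)) (G := -G)
      (hφc.comp continuous_neg) (fun c => hlevel c ▸ (hφq c).neg)
      ((hneg _).1 (by simpa using hx₀)) ((hneg _).1 (by simpa using hz)) (by simpa using hφ)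
      hG.neg (fun x hx => (hneg _).1 (hGR _ hx))
      (fun r hr h => by
        obtain ⟨y, hy⟩ := hlt (-r) ((hneg r).2 hr) (by simpa using h)
        exact ⟨-y, by simpa [Set.mem_neg] using hy⟩)
      (fun r hr h => by
        simpa [Set.mem_neg] using heq (-r) ((hneg r).2 hr) (by simpa using h))
      (neg_lt_neg hzx₀)
    exact ⟨-s, -y₂, -y₁, h₂, h₁, neg_le_neg hs₂, neg_le_neg hs₁⟩
  set C := {r ∈ Icc lo hi | φ z ≤ φ r}
  have hzC : z ∈ C := ⟨hz, le_rfl⟩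
  have hCb : BddBelow C := ⟨lo, fun r hr => hr.1.1⟩
  have hσC : sInf C ∈ C :=
    (isClosed_Icc.inter (isClosed_le continuous_const hφc)).csInf_mem ⟨z, hzC⟩ hCb
  set σ := sInf C
  have hx₀σ : x₀ < σ := by
    by_contra! h
    exact ((hφq (φ z)).ordConnected.out hσC hzC ⟨h, hx₀z.le⟩).2.not_gt hφ
  have hbelow : ∀ r ∈ Ico lo σ, φ r < φ z := fun r hr =>
    not_le.1 fun h => (csInf_le hCb ⟨⟨hr.1, hr.2.le.trans hσC.1.2⟩, h⟩).not_gt hr.2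
  have hσ : φ σ = φ z := by
    refine le_antisymm (le_of_tendsto (f := φ) (x := 𝓝[<] σ) ?_ ?_) hσC.2
    · exact hφc.continuousAt.mono_left nhdsWithin_le_nhds
    filter_upwards [Ioo_mem_nhdsLT hx₀σ] with r hr
    exact (hbelow r ⟨hx₀.1.trans hr.1.le, hr.2⟩).le
  have hloσ : lo < σ := hx₀.1.trans_lt hx₀σ
  refine exists_bracket_of_isCompact hG hloσ.le (fun r hr => ?_) ?_ ⟨x₀, heq σ hσC.1 hσ, hx₀σ.le⟩
  · rcases hr.2.lt_or_eq with h | rfl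
    · exact hlt r ⟨hr.1, h.le.trans hσC.1.2⟩ (hbelow r ⟨hr.1, h⟩)
    · exact ⟨x₀, heq _ hσC.1 hσ⟩
  · obtain ⟨y, hy⟩ := hlt lo ⟨le_rfl, hloσ.le.trans hσC.1.2⟩ (hbelow lo ⟨le_rfl, hloσ⟩)
    exact ⟨y, hy, (hGR _ hy).1⟩

section Measures

variable {X : Type*} [MeasurableSpace X]

lemma mSupp_subset_of_measure_compl_eq_zero [TopologicalSpace X] {μ : Measure X} {s : Set X}
    (hs : IsClosed s) (hμ : μ sᶜ = 0) : mSupp μ ⊆ s :=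
  fun _ hx => by_contra fun h => (hx sᶜ hs.isOpen_compl h).ne' hμ

variable [MeasurableSingletonClass X]

lemma mSupp_dirac_subset [TopologicalSpace X] [T1Space X] (x : X) :
    mSupp (Measure.dirac x) ⊆ {x} :=
  mSupp_subset_of_measure_compl_eq_zero isClosed_singleton (by simp)

lemma mSupp_add_dirac_subset [TopologicalSpace X] [T1Space X] (x₁ x₂ : X) (c₁ c₂ : ℝ≥0∞) :
    mSupp (c₁ • Measure.dirac x₁ + c₂ • Measure.dirac x₂) ⊆ {x₁, x₂} :=
  mSupp_subset_of_measure_compl_eq_zero (Set.toFinite _).isClosed (by simp)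

lemma integral_add_dirac (f : X → ℝ) (x₁ x₂ : X) {c₁ c₂ : ℝ} (h₁ : 0 ≤ c₁) (h₂ : 0 ≤ c₂) :
    ∫ x, f x ∂(ENNReal.ofReal c₁ • Measure.dirac x₁ + ENNReal.ofReal c₂ • Measure.dirac x₂) =
      c₁ * f x₁ + c₂ * f x₂ := by
  rw [integral_add_measure ((integrable_dirac (by simp)).smul_measure ENNReal.ofReal_ne_top)
      ((integrable_dirac (by simp)).smul_measure ENNReal.ofReal_ne_top),
    integral_smul_measure, integral_smul_measure, integral_dirac, integral_dirac,
    ENNReal.toReal_ofReal h₁, ENNReal.toReal_ofReal h₂, smul_eq_mul, smul_eq_mul]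

end Measures

section Game

def agentPayoff (uA : ℝ → ℝ → ℝ) (r : ℝ) (p : ℝ × ℝ) : ℝ :=
  uA p.1 r - p.2

variable {uA uO d1 : ℝ → ℝ → ℝ} {A R : Set ℝ} {M : Set (ℝ × ℝ)}

/-- `T(a';M) ≥ t'` because of `r₀`, hence `V(ρ;M) ≤ u_A(a',ρ) - t'`. -/
lemma isMaxOn_agentPayoff_of_critical (hbdd : ∀ r, BddAbove (agentPayoff uA r '' M))
    {a' t' r₀ ρ : ℝ} (hat : (a', t') ∈ M) (hr₀ : r₀ ∈ R) (hcrit : Vfun uA M r₀ = uA a' r₀ - t')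
    (hρ : ρ ∈ dualReplies uA R M a') : IsMaxOn (agentPayoff uA ρ) M (a', t') := by
  have hV : ∀ r, ∀ q ∈ M, agentPayoff uA r q ≤ Vfun uA M r :=
    fun r q hq => le_csSup (hbdd r) (Set.mem_image_of_mem _ hq)
  have hT : t' ≤ Tfun uA R M a' := by
    refine le_csSup ⟨t', ?_⟩ ⟨r₀, hr₀, by beta_reduce; rw [hcrit]; ring⟩
    rintro _ ⟨r, -, rfl⟩
    linarith [hV r _ hat, show agentPayoff uA r (a', t') = uA a' r - t' from rfl]
  refine isMaxOn_iff.2 fun q hq => ?_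
  linarith [hV ρ q hq, hρ.2, show agentPayoff uA ρ (a', t') = uA a' ρ - t' from rfl]

lemma RankedIncentives.lt_of_lt (h : RankedIncentives d1 A R) {a₀ r₁ r₂ : ℝ} (ha₀ : a₀ ∈ A)
    (h₁ : r₁ ∈ R) (h₂ : r₂ ∈ R) (hlt : d1 a₀ r₁ < d1 a₀ r₂) : ∀ a ∈ A, d1 a r₁ < d1 a r₂ := by
  have hnot : ¬ succeqAI d1 A r₁ r₂ := fun h12 => (h12 a₀ ha₀).not_gt hlt
  exact h.2 r₂ h₂ r₁ h₁ ⟨(h.1 r₁ h₁ r₂ h₂).resolve_left hnot, hnot⟩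

lemma RankedIncentives.eq_of_eq (h : RankedIncentives d1 A R) {a₀ r₁ r₂ : ℝ} (ha₀ : a₀ ∈ A)
    (h₁ : r₁ ∈ R) (h₂ : r₂ ∈ R) (heq : d1 a₀ r₁ = d1 a₀ r₂) : ∀ a ∈ A, d1 a r₁ = d1 a r₂ := by
  intro a ha
  rcases lt_trichotomy (d1 a r₁) (d1 a r₂) with hlt | heq' | hgt
  · exact absurd heq (h.lt_of_lt ha h₁ h₂ hlt a₀ ha₀).ne
  · exact heq'
  · exact absurd heq (h.lt_of_lt ha h₂ h₁ hgt a₀ ha₀).ne'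

lemma IntuitiveMixture.quasiconcaveOn (h : IntuitiveMixture d1 A R) (hR : R.OrdConnected)
    {a₀ : ℝ} (ha₀ : a₀ ∈ A) : QuasiconcaveOn ℝ R (d1 a₀) := by
  refine fun c => Set.OrdConnected.convex ⟨fun x hx y hy r hr => ⟨hR.out hx.1 hy.1 hr, ?_⟩⟩
  have hxy : x ≤ y := hr.1.trans hr.2
  rcases h x hx.1 y hy.1 r (by simpa [hxy] using hr.1) (by simpa [hxy] using hr.2) with hrx | hry
  exacts [hx.2.trans (hrx a₀ ha₀), hy.2.trans (hry a₀ ha₀)]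

section SingleCrossing

variable (hA : Convex ℝ A) (hd1 : ∀ a r, HasDerivAt (fun x => uA x r) (d1 a r) a)
include hA hd1

lemma monotoneOn_sub_of_le {r r' : ℝ} (hle : ∀ a ∈ A, d1 a r ≤ d1 a r') :
    MonotoneOn (fun a => uA a r' - uA a r) A :=
  monotoneOn_of_hasDerivWithinAt_nonneg hA
    (fun a _ => ((hd1 a r').sub (hd1 a r)).continuousAt.continuousWithinAt)
    (fun a _ => ((hd1 a r').sub (hd1 a r)).hasDerivWithinAt)
    (fun a ha => sub_nonneg.2 (hle a (interior_subset ha)))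

lemma le_of_isMaxOn_agentPayoff (hMA : ∀ p ∈ M, p.1 ∈ A) {r r' : ℝ}
    (hlt : ∀ a ∈ A, d1 a r < d1 a r') {p q : ℝ × ℝ} (hp : p ∈ M) (hq : q ∈ M)
    (hpmax : IsMaxOn (agentPayoff uA r) M p) (hqmax : IsMaxOn (agentPayoff uA r') M q) :
    p.1 ≤ q.1 := by
  have hmono : StrictMonoOn (fun a => uA a r' - uA a r) A :=
    strictMonoOn_of_hasDerivWithinAt_pos hA
      (fun a _ => ((hd1 a r').sub (hd1 a r)).continuousAt.continuousWithinAt)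
      (fun a _ => ((hd1 a r').sub (hd1 a r)).hasDerivWithinAt)
      (fun a ha => sub_pos.2 (hlt a (interior_subset ha)))
  refine (hmono.le_iff_le (hMA p hp) (hMA q hq)).1 ?_
  have h₁ := isMaxOn_iff.1 hpmax q hq
  have h₂ := isMaxOn_iff.1 hqmax p hp
  simp only [agentPayoff] at h₁ h₂ ⊢
  linarith

lemma isMaxOn_agentPayoff_of_eq (hMA : ∀ p ∈ M, p.1 ∈ A) {r r' : ℝ}
    (heq : ∀ a ∈ A, d1 a r = d1 a r') {q : ℝ × ℝ} (hq : q ∈ M)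
    (hqmax : IsMaxOn (agentPayoff uA r') M q) : IsMaxOn (agentPayoff uA r) M q := by
  have h₁ := monotoneOn_sub_of_le hA hd1 fun a ha => (heq a ha).le
  have h₂ := monotoneOn_sub_of_le hA hd1 fun a ha => (heq a ha).ge
  refine isMaxOn_iff.2 fun p hp => ?_
  have hpq := isMaxOn_iff.1 hqmax p hp
  simp only [agentPayoff] at hpq ⊢
  rcases le_total p.1 q.1 with h | h
  · linarith [h₁ (hMA p hp) (hMA q hq) h, h₂ (hMA p hp) (hMA q hq) h]
  · linarith [h₁ (hMA q hq) (hMA p hp) h, h₂ (hMA q hq) (hMA p hp) h]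

def replyGraphBelow (uA uO : ℝ → ℝ → ℝ) (R : Set ℝ) (M : Set (ℝ × ℝ)) (a' : ℝ) : Set (ℝ × ℝ) :=
  {x | ∃ p ∈ M, x.1 ∈ R ∧ IsMaxOn (agentPayoff uA x.1) M p ∧ p.1 ≤ a' ∧
    x.2 ∈ R ∧ IsMaxOn (uO p.1) R x.2}

lemma exists_mem_replyGraphBelow (hMA : ∀ p ∈ M, p.1 ∈ A) (hM : IsCompact M) (hMne : M.Nonempty)
    (hpay : ∀ r, ContinuousOn (agentPayoff uA r) M) (hO : ∀ a ∈ A, ∃ y ∈ R, IsMaxOn (uO a) R y)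
    {r r' : ℝ} (hr : r ∈ R) (hlt : ∀ a ∈ A, d1 a r < d1 a r') {q : ℝ × ℝ} (hq : q ∈ M)
    (hqmax : IsMaxOn (agentPayoff uA r') M q) : ∃ y, (r, y) ∈ replyGraphBelow uA uO R M q.1 := by
  obtain ⟨p, hpM, hp⟩ := hM.exists_isMaxOn hMne (hpay r)
  obtain ⟨y, hy, hymax⟩ := hO p.1 (hMA p hpM)
  exact ⟨y, p, hpM, hr, hp, le_of_isMaxOn_agentPayoff hA hd1 hMA hlt hpM hq hp hqmax, hy, hymax⟩

lemma mem_replyGraphBelow_of_eq (hMA : ∀ p ∈ M, p.1 ∈ A) {r r' : ℝ} (hr : r ∈ R)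
    (heq : ∀ a ∈ A, d1 a r = d1 a r') {q : ℝ × ℝ} (hq : q ∈ M)
    (hqmax : IsMaxOn (agentPayoff uA r') M q) {y : ℝ} (hy : y ∈ R) (hymax : IsMaxOn (uO q.1) R y) :
    (r, y) ∈ replyGraphBelow uA uO R M q.1 :=
  ⟨q, hq, hr, isMaxOn_agentPayoff_of_eq hA hd1 hMA heq hq hqmax, le_rfl, hy, hymax⟩

end SingleCrossing

lemma isCompact_replyGraphBelow (huA : Continuous fun p : ℝ × ℝ => uA p.1 p.2)
    (huO : Continuous fun p : ℝ × ℝ => uO p.1 p.2) (hR : IsCompact R) (hM : IsCompact M)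
    (a' : ℝ) : IsCompact (replyGraphBelow uA uO R M a') := by
  set T : Set (ℝ × (ℝ × ℝ) × ℝ) := R ×ˢ M ×ˢ R ∩
    {x | IsMaxOn (agentPayoff uA x.1) M x.2.1 ∧ x.2.1.1 ≤ a' ∧ IsMaxOn (uO x.2.1.1) R x.2.2}
  have ha : Continuous fun x : ℝ × (ℝ × ℝ) × ℝ => x.2.1.1 := by fun_prop
  have hT : IsCompact T := by
    refine (hR.prod (hM.prod hR)).inter_right (IsClosed.inter ?_ (IsClosed.inter ?_ ?_))
    · exact isClosed_setOf_isMaxOn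
        (fun q _ => (huA.comp (continuous_const.prodMk continuous_fst)).sub continuous_const)
        ((huA.comp (ha.prodMk continuous_fst)).sub (by fun_prop))
    · exact isClosed_le ha continuous_const
    · exact isClosed_setOf_isMaxOn (fun y _ => huO.comp (ha.prodMk continuous_const))
        (huO.comp (ha.prodMk (continuous_snd.comp continuous_snd)))
  convert hT.image (f := fun x => (x.1, x.2.2)) (by fun_prop) using 1
  ext ⟨r, y⟩
  constructor
  · rintro ⟨p, hpM, hr, hp, hpa, hy, hpy⟩
    exact ⟨(r, p, y), ⟨⟨hr, hpM, hy⟩, hp, hpa, hpy⟩, rfl⟩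
  · rintro ⟨⟨r, p, y⟩, ⟨⟨hr, hpM, hy⟩, hp, hpa, hpy⟩, h⟩
    obtain ⟨rfl, rfl⟩ := Prod.mk.inj h
    exact ⟨p, hpM, hr, hp, hpa, hy, hpy⟩

lemma isNash_add_dirac {p₁ p₂ : ℝ × ℝ} {r w : ℝ} (hp₁ : p₁ ∈ M) (hp₂ : p₂ ∈ M) (hr : r ∈ R)
    (hw : w ∈ Icc (0 : ℝ) 1) (h₁ : IsMaxOn (agentPayoff uA r) M p₁)
    (h₂ : IsMaxOn (agentPayoff uA r) M p₂)
    (hO : IsMaxOn (fun r' => (1 - w) * uO p₁.1 r' + w * uO p₂.1 r') R r) :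
    IsNash uA uO R M
      (ENNReal.ofReal (1 - w) • Measure.dirac p₁ + ENNReal.ofReal w • Measure.dirac p₂)
      (Measure.dirac r) := by
  have hsupp := mSupp_add_dirac_subset p₁ p₂ (ENNReal.ofReal (1 - w)) (ENNReal.ofReal w)
  have hint := fun r' => integral_add_dirac (fun p : ℝ × ℝ => uO p.1 r') p₁ p₂
    (sub_nonneg.2 hw.2) hw.1
  refine ⟨⟨?_⟩, inferInstance, hsupp.trans (Set.pair_subset hp₁ hp₂),
    (mSupp_dirac_subset r).trans (Set.singleton_subset_iff.2 hr), ?_, ?_⟩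
  · simp [← ENNReal.ofReal_add (sub_nonneg.2 hw.2) hw.1]
  · intro p hp q hq
    simp only [integral_dirac]
    rcases hsupp hp with rfl | rfl
    exacts [isMaxOn_iff.1 h₁ q hq, isMaxOn_iff.1 h₂ q hq]
  · intro r₀ hr₀ r' hr'
    rw [mSupp_dirac_subset r hr₀, hint, hint]
    exact isMaxOn_iff.1 hO r' hr'

end Game

theorem stmt12_general (a0 abar rlo rhi : ℝ) (hA : a0 < abar)
    (uA uO : ℝ → ℝ → ℝ)
    (huA : ContDiff ℝ 2 fun p : ℝ × ℝ => uA p.1 p.2)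
    (huO : ContDiff ℝ 2 fun p : ℝ × ℝ => uO p.1 p.2)
    (hconc : ∀ a ∈ Set.Icc a0 abar, StrictConcaveOn ℝ (Set.Icc rlo rhi) (fun r => uO a r))
    (d1 : ℝ → ℝ → ℝ)
    (hd1 : ∀ a r : ℝ, HasDerivAt (fun x => uA x r) (d1 a r) a)
    (hRI : RankedIncentives d1 (Set.Icc a0 abar) (Set.Icc rlo rhi))
    (hIM : IntuitiveMixture d1 (Set.Icc a0 abar) (Set.Icc rlo rhi))
    (rBR : ℝ → ℝ)
    (hrBR : ∀ a ∈ Set.Icc a0 abar, rBR a ∈ Set.Icc rlo rhi ∧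
      ∀ r' ∈ Set.Icc rlo rhi, r' ≠ rBR a → uO a r' < uO a (rBR a))
    (M : Set (ℝ × ℝ)) (hM : IsContract a0 abar M)
    (a' t' : ℝ) (hat : (a', t') ∈ M)
    (r0 : ℝ) (hr0 : r0 ∈ Set.Icc rlo rhi)
    (hcrit : Vfun uA M r0 = uA a' r0 - t')
    (ρstar : ℝ) (hρstar : ρstar ∈ dualReplies uA (Set.Icc rlo rhi) M a')
    (hdom : succAI d1 (Set.Icc a0 abar) ρstar (rBR a')) :
    ∃ β ρ, IsNash uA uO (Set.Icc rlo rhi) M β ρ ∧ ∀ p ∈ mSupp β, p.1 ≤ a' := by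
  obtain ⟨hMne, hMc, hMA⟩ := hM
  have hMA' : ∀ p ∈ M, p.1 ∈ Icc a0 abar := fun p hp => (hMA hp).1
  have ha0 : a0 ∈ Icc a0 abar := left_mem_Icc.2 hA.le
  have ha' : a' ∈ Icc a0 abar := hMA' _ hat
  have hcA : Continuous fun p : ℝ × ℝ => uA p.1 p.2 := huA.continuous
  have hpay : ∀ r, ContinuousOn (agentPayoff uA r) M := fun r =>
    ((hcA.comp (continuous_fst.prodMk continuous_const)).sub continuous_snd).continuousOn
  have hbr : ∀ a ∈ Icc a0 abar, rBR a ∈ Icc rlo rhi ∧ IsMaxOn (uO a) (Icc rlo rhi) (rBR a) :=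
    fun a ha => ⟨(hrBR a ha).1, isMaxOn_iff.2 fun r hr => by
      rcases eq_or_ne r (rBR a) with rfl | hne
      exacts [le_rfl, ((hrBR a ha).2 r hr hne).le]⟩
  have hcrit' : IsMaxOn (agentPayoff uA ρstar) M (a', t') :=
    isMaxOn_agentPayoff_of_critical (fun r => hMc.bddAbove_image (hpay r)) hat hr0 hcrit hρstar
  obtain ⟨s, y₁, y₂, ⟨p₁, hp₁M, hs, hp₁, hp₁a, hy₁R, hy₁⟩, ⟨p₂, hp₂M, -, hp₂, hp₂a, hy₂R, hy₂⟩,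
      hy₁s, hsy₂⟩ :=
    exists_bracket_of_quasiconcaveOn (continuous_of_hasDerivAt_fst (huA.of_le one_le_two) hd1 a0)
      (hIM.quasiconcaveOn ordConnected_Icc ha0) (hbr a' ha').1 hρstar.1
      (hRI.2 _ hρstar.1 _ (hbr a' ha').1 hdom a0 ha0)
      (isCompact_replyGraphBelow hcA huO.continuous isCompact_Icc hMc a')
      (fun _ ⟨_, _, _, _, _, hy, _⟩ => hy)
      (fun r hr hlt => exists_mem_replyGraphBelow (convex_Icc a0 abar) hd1 hMA' hMc hMne hpay
        (fun a ha => ⟨rBR a, hbr a ha⟩) hr (hRI.lt_of_lt ha0 hr hρstar.1 hlt) hat hcrit')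
      (fun r hr heq => mem_replyGraphBelow_of_eq (convex_Icc a0 abar) hd1 hMA' hr
        (hRI.eq_of_eq ha0 hr hρstar.1 heq) hat hcrit' (hbr a' ha').1 (hbr a' ha').2)
  have hderiv : ∀ a, HasDerivAt (uO a) (deriv (uO a) s) s := fun a =>
    ((huO.differentiable two_ne_zero).comp
      ((differentiable_const a).prodMk differentiable_id) s).hasDerivAt
  obtain ⟨w, hw, hmax⟩ := exists_isMaxOn_convexCombination
    (hconc _ (hMA' _ hp₁M)).concaveOn (hconc _ (hMA' _ hp₂M)).concaveOn (hderiv _) (hderiv _)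
    hs hy₁R hy₂R hy₁ hy₂ hy₁s hsy₂
  refine ⟨_, _, isNash_add_dirac hp₁M hp₂M hs hw hp₁ hp₂ hmax, fun p hp => ?_⟩
  rcases mSupp_add_dirac_subset _ _ _ _ hp with rfl | rfl
  exacts [hp₁a, hp₂a]

/-- If a contract `M` contains a critical plan `(a',t')` at which some dual reply
`ρ*` satisfies `ρ* ≻_AI r(a')`, then the game induced by `M` has a Nash equilibrium in which
every on-path action is at most `a'`. -/
theorem stmt12 (a0 abar rlo rhi : ℝ) (hA : a0 < abar) (hR : rlo < rhi)
    (uA uO : ℝ → ℝ → ℝ)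
    (huA : ContDiff ℝ 2 fun p : ℝ × ℝ => uA p.1 p.2)
    (huO : ContDiff ℝ 2 fun p : ℝ × ℝ => uO p.1 p.2)
    (hconc : ∀ a ∈ Set.Icc a0 abar, StrictConcaveOn ℝ (Set.Icc rlo rhi) (fun r => uO a r))
    (d1 : ℝ → ℝ → ℝ)
    (hd1 : ∀ a r : ℝ, HasDerivAt (fun x => uA x r) (d1 a r) a)
    (hRI : RankedIncentives d1 (Set.Icc a0 abar) (Set.Icc rlo rhi))
    (hIM : IntuitiveMixture d1 (Set.Icc a0 abar) (Set.Icc rlo rhi))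
    (rBR : ℝ → ℝ)
    (hrBR : ∀ a ∈ Set.Icc a0 abar, rBR a ∈ Set.Icc rlo rhi ∧
      ∀ r' ∈ Set.Icc rlo rhi, r' ≠ rBR a → uO a r' < uO a (rBR a))
    (M : Set (ℝ × ℝ)) (hM : IsContract a0 abar M)
    (a' t' : ℝ) (hat : (a', t') ∈ M)
    (r0 : ℝ) (hr0 : r0 ∈ Set.Icc rlo rhi)
    (hcrit : Vfun uA M r0 = uA a' r0 - t')
    (ρstar : ℝ) (hρstar : ρstar ∈ dualReplies uA (Set.Icc rlo rhi) M a')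
    (hdom : succAI d1 (Set.Icc a0 abar) ρstar (rBR a')) :
    ∃ β ρ, IsNash uA uO (Set.Icc rlo rhi) M β ρ ∧ ∀ p ∈ mSupp β, p.1 ≤ a' :=
  stmt12_general a0 abar rlo rhi hA uA uO huA huO hconc d1 hd1 hRI hIM rBR hrBR M hM a' t' hat r0
    hr0 hcrit ρstar hρstar hdom
end

section
/- Define the integrated-game payoff ũ(a,r) = u_P(a, r(a)) + u_A(a,r) − u_A(a₀,r) for (a,r) ∈ A × R. Then: (i) every a_P maximizing U_0 over A satisfies ũ(a_P, r(a_P)) ≥ ũ(a, r(a)) for all a ∈ A (a_P is a Stackelberg outcome of the integrated game); and (ii) if externalities are pure — i.e. either ∂²u_A/∂a∂r ≥ 0 and ∂²u_O/∂a∂r ≥ 0 everywhere on A × R, or ∂²u_A/∂a∂r ≤ 0 and ∂²u_O/∂a∂r ≤ 0 everywhere on A × R — then every a_F maximizing U_F over A satisfies ũ(a_F, r(a_F)) ≥ ũ(a, r(a_F)) for all a ∈ A, so that (a_F, r(a_F)) is a Nash outcome of the integrated game. -/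
/-!
By the fundamental theorem of calculus, `U_0(a) = ũ(a, r(a))`, which is part (i).

For part (ii), pure externalities give the outsider's payoff monotone differences in `(a, r)`,
so the strict best reply `r` is monotone (or antitone), and `∂₁u_A(t, ·)` moves in the same
direction; hence `x ≤ y` implies `r(y) ≽_AI r(x)`. Then the maximum and the minimum in `U_F` are
both attained on the diagonal, so `U_F(a) = u_P(a, r(a)) + ∫_{a₀}^{a} ∂₁u_A(t, r(t)) dt`.
Also `ũ(a, r(a_F)) = u_P(a, r(a)) + ∫_{a₀}^{a} ∂₁u_A(t, r(a_F)) dt`, and the difference of the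
two integrands is `≥ 0` left of `a_F` and `≤ 0` right of it, so `ũ(·, r(a_F)) - U_F` is maximal
at `a_F` as well.
-/

open MeasureTheory Set

/-- The robust (full-implementation) value of inducing the pure outcome `a`:
`U_F(a) = u_P(a,r(a)) + ∫_{a₀}^{a} min(max_{a'' ∈ [a₀,a']} ∂₁u_A(a',r(a'')), ∂₁u_A(a',r(a))) da'`. -/
noncomputable def UFval (d1 uP : ℝ → ℝ → ℝ) (rBR : ℝ → ℝ) (a0 a : ℝ) : ℝ :=
  uP a (rBR a) +
    ∫ a' in a0..a,
      min (sSup ((fun a'' => d1 a' (rBR a'')) '' Set.Icc a0 a')) (d1 a' (rBR a))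

/-- The partial-implementation value of inducing the pure outcome `a`:
`U_0(a) = u_P(a,r(a)) + ∫_{a₀}^{a} ∂₁u_A(a',r(a)) da'`. -/
noncomputable def U0val (d1 uP : ℝ → ℝ → ℝ) (rBR : ℝ → ℝ) (a0 a : ℝ) : ℝ :=
  uP a (rBR a) + ∫ a' in a0..a, d1 a' (rBR a)

lemma monotoneOn_Icc_of_hasDerivAt_nonneg {f f' : ℝ → ℝ} (hf : ∀ x, HasDerivAt f (f' x) x)
    {a b : ℝ} (hf' : ∀ x ∈ Icc a b, 0 ≤ f' x) : MonotoneOn f (Icc a b) :=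
  monotoneOn_of_hasDerivWithinAt_nonneg (convex_Icc a b)
    (fun x _ => (hf x).continuousAt.continuousWithinAt) (fun x _ => (hf x).hasDerivWithinAt)
    fun x hx => hf' x (interior_subset hx)

lemma antitoneOn_Icc_of_hasDerivAt_nonpos {f f' : ℝ → ℝ} (hf : ∀ x, HasDerivAt f (f' x) x)
    {a b : ℝ} (hf' : ∀ x ∈ Icc a b, f' x ≤ 0) : AntitoneOn f (Icc a b) :=
  antitoneOn_of_hasDerivWithinAt_nonpos (convex_Icc a b)
    (fun x _ => (hf x).continuousAt.continuousWithinAt) (fun x _ => (hf x).hasDerivWithinAt)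
    fun x hx => hf' x (interior_subset hx)

lemma continuous_partialDeriv_of_contDiff {u d : ℝ → ℝ → ℝ}
    (hu : ContDiff ℝ 1 fun p : ℝ × ℝ => u p.1 p.2)
    (hd : ∀ a r, HasDerivAt (fun x => u x r) (d a r) a) :
    Continuous fun p : ℝ × ℝ => d p.1 p.2 := by
  have hd_eq : (fun p : ℝ × ℝ => d p.1 p.2) =
      fun p => fderiv ℝ (fun q : ℝ × ℝ => u q.1 q.2) p (1, 0) := by
    funext p
    refine (hd p.1 p.2).unique ?_
    exact ((hu.differentiable one_ne_zero) p).hasFDerivAt.comp_hasDerivAt p.1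
      (by simpa using (hasDerivAt_id p.1).prodMk (hasDerivAt_const p.1 p.2))
  rw [hd_eq]
  exact (hu.continuous_fderiv one_ne_zero).clm_apply continuous_const

lemma integral_partialDeriv_eq_sub {u d : ℝ → ℝ → ℝ}
    (hdc : Continuous fun p : ℝ × ℝ => d p.1 p.2)
    (hd : ∀ a r, HasDerivAt (fun x => u x r) (d a r) a) (r x y : ℝ) :
    ∫ t in x..y, d t r = u y r - u x r :=
  intervalIntegral.integral_eq_sub_of_hasDerivAt (fun t _ => hd t r)
    ((hdc.comp (continuous_id.prodMk continuous_const)).intervalIntegrable x y)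

lemma integrableOn_Icc_comp_of_aemeasurable {g : ℝ → ℝ → ℝ}
    (hg : Continuous fun p : ℝ × ℝ => g p.1 p.2) {r : ℝ → ℝ} {a b : ℝ} {K : Set ℝ}
    (hK : IsCompact K) (hrK : MapsTo r (Icc a b) K)
    (hr : AEMeasurable r (volume.restrict (Icc a b))) :
    IntegrableOn (fun t => g t (r t)) (Icc a b) := by
  obtain ⟨C, hC⟩ := (isCompact_Icc.prod hK).exists_bound_of_continuousOn hg.continuousOn
  refine IntegrableOn.of_bound measure_Icc_lt_top
    (hg.measurable.comp_aemeasurable (aemeasurable_id.prodMk hr)).aestronglyMeasurable C ?_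
  filter_upwards [ae_restrict_mem measurableSet_Icc] with t ht
  exact hC (t, r t) ⟨ht, hrK ht⟩

lemma intervalIntegral.integral_le_integral_of_le_of_ge {f g : ℝ → ℝ} {a b : ℝ}
    (hf : IntervalIntegrable f volume a b) (hg : IntervalIntegrable g volume a b)
    (hle : ∀ t ∈ Icc a b, f t ≤ g t) (hge : ∀ t ∈ Icc b a, g t ≤ f t) :
    ∫ t in a..b, f t ≤ ∫ t in a..b, g t := by
  rcases le_total a b with hab | hba
  · exact integral_mono_on hab hf hg hle
  · rw [integral_symm, integral_symm b]
    exact neg_le_neg (integral_mono_on hba hg.symm hf.symm hge)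

section BestReply

variable {u d : ℝ → ℝ → ℝ} (hd : ∀ a r, HasDerivAt (fun x => u x r) (d a r) a)
include hd

lemma sub_le_sub_of_partialDeriv_le {x y r₁ r₂ : ℝ} (hxy : x ≤ y)
    (h : ∀ t ∈ Icc x y, d t r₁ ≤ d t r₂) : u x r₂ - u x r₁ ≤ u y r₂ - u y r₁ :=
  monotoneOn_Icc_of_hasDerivAt_nonneg (fun t => (hd t r₂).sub (hd t r₁))
    (fun t ht => sub_nonneg.2 (h t ht)) (left_mem_Icc.2 hxy) (right_mem_Icc.2 hxy) hxy

/-- The strict-maximiser step of Topkis' monotone comparative statics. -/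
lemma eq_of_isStrictMax_of_partialDeriv_le {R : Set ℝ} {x y rx ry : ℝ} (hxy : x ≤ y)
    (hrx : rx ∈ R) (hry : ry ∈ R) (hx : ∀ s ∈ R, s ≠ rx → u x s < u x rx)
    (hy : ∀ s ∈ R, s ≠ ry → u y s < u y ry) (h : ∀ t ∈ Icc x y, d t ry ≤ d t rx) :
    rx = ry := by
  by_contra hne
  have hx' := hx ry hry (Ne.symm hne)
  have hy' := hy rx hrx hne
  have := sub_le_sub_of_partialDeriv_le hd hxy h
  linarith

variable {A R : Set ℝ} [A.OrdConnected] {r : ℝ → ℝ}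
  (hr : ∀ a ∈ A, r a ∈ R ∧ ∀ s ∈ R, s ≠ r a → u a s < u a (r a))
include hr

lemma monotoneOn_of_isStrictMax (hmono : ∀ t ∈ A, MonotoneOn (d t) R) : MonotoneOn r A := by
  intro x hx y hy hxy
  by_contra! hlt
  exact hlt.ne <| (eq_of_isStrictMax_of_partialDeriv_le hd hxy (hr x hx).1 (hr y hy).1
    (hr x hx).2 (hr y hy).2 fun t ht =>
      hmono t (A.Icc_subset hx hy ht) (hr y hy).1 (hr x hx).1 hlt.le).symm

lemma antitoneOn_of_isStrictMax (hanti : ∀ t ∈ A, AntitoneOn (d t) R) : AntitoneOn r A := by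
  intro x hx y hy hxy
  by_contra! hlt
  exact hlt.ne <| eq_of_isStrictMax_of_partialDeriv_le hd hxy (hr x hx).1 (hr y hy).1
    (hr x hx).2 (hr y hy).2 fun t ht =>
      hanti t (A.Icc_subset hx hy ht) (hr x hx).1 (hr y hy).1 hlt.le

end BestReply

def IncentiveMonotoneOn (d1 : ℝ → ℝ → ℝ) (A : Set ℝ) (r : ℝ → ℝ) : Prop :=
  ∀ x ∈ A, ∀ y ∈ A, x ≤ y → succeqAI d1 A (r y) (r x)

lemma incentiveMonotoneOn_of_pureExternalities {uO d1 dO1 uAar uOar : ℝ → ℝ → ℝ}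
    {A : Set ℝ} [hA : A.OrdConnected] {rlo rhi : ℝ} {r : ℝ → ℝ}
    (hdO1 : ∀ a s, HasDerivAt (fun x => uO x s) (dO1 a s) a)
    (hr : ∀ a ∈ A, r a ∈ Icc rlo rhi ∧ ∀ s ∈ Icc rlo rhi, s ≠ r a → uO a s < uO a (r a))
    (huAar : ∀ a s, HasDerivAt (fun s => d1 a s) (uAar a s) s)
    (huOar : ∀ a s, HasDerivAt (fun s => dO1 a s) (uOar a s) s)
    (hext : (∀ a ∈ A, ∀ s ∈ Icc rlo rhi, 0 ≤ uAar a s ∧ 0 ≤ uOar a s) ∨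
      (∀ a ∈ A, ∀ s ∈ Icc rlo rhi, uAar a s ≤ 0 ∧ uOar a s ≤ 0)) :
    AEMeasurable r (volume.restrict A) ∧ IncentiveMonotoneOn d1 A r := by
  rcases hext with hpos | hneg
  · have hrm : MonotoneOn r A := monotoneOn_of_isStrictMax hdO1 hr fun t ht =>
      monotoneOn_Icc_of_hasDerivAt_nonneg (huOar t) fun s hs => (hpos t ht s hs).2
    refine ⟨aemeasurable_restrict_of_monotoneOn hA.measurableSet hrm,
      fun x hx y hy hxy t ht => ?_⟩
    exact monotoneOn_Icc_of_hasDerivAt_nonneg (huAar t) (fun s hs => (hpos t ht s hs).1)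
      (hr x hx).1 (hr y hy).1 (hrm hx hy hxy)
  · have hra : AntitoneOn r A := antitoneOn_of_isStrictMax hdO1 hr fun t ht =>
      antitoneOn_Icc_of_hasDerivAt_nonpos (huOar t) fun s hs => (hneg t ht s hs).2
    refine ⟨aemeasurable_restrict_of_antitoneOn hA.measurableSet hra,
      fun x hx y hy hxy t ht => ?_⟩
    exact antitoneOn_Icc_of_hasDerivAt_nonpos (huAar t) (fun s hs => (hneg t ht s hs).1)
      (hr y hy).1 (hr x hx).1 (hra hx hy hxy)

section IntegratedGame

variable {uA uP d1 : ℝ → ℝ → ℝ} {r : ℝ → ℝ} {a0 abar : ℝ}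

lemma U0val_eq (hd1c : Continuous fun p : ℝ × ℝ => d1 p.1 p.2)
    (hd1 : ∀ a s, HasDerivAt (fun x => uA x s) (d1 a s) a) (a : ℝ) :
    U0val d1 uP r a0 a = uP a (r a) + uA a (r a) - uA a0 (r a) := by
  rw [U0val, integral_partialDeriv_eq_sub hd1c hd1, add_sub_assoc]

/-- Once `r` is incentive-monotone, both the running maximum and the minimum in `U_F` are
attained on the diagonal `a'' = a'`. -/
lemma UFval_eq_of_incentiveMonotoneOn (hK : IncentiveMonotoneOn d1 (Icc a0 abar) r) {x : ℝ}
    (hx : x ∈ Icc a0 abar) :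
    UFval d1 uP r a0 x = uP x (r x) + ∫ t in a0..x, d1 t (r t) := by
  rw [UFval]
  congr 1
  refine intervalIntegral.integral_congr fun t ht => ?_
  rw [uIcc_of_le hx.1] at ht
  have htA : t ∈ Icc a0 abar := ⟨ht.1, ht.2.trans hx.2⟩
  have hsup : sSup ((fun a'' => d1 t (r a'')) '' Icc a0 t) = d1 t (r t) := by
    refine IsGreatest.csSup_eq ⟨⟨t, right_mem_Icc.2 ht.1, rfl⟩, ?_⟩
    rintro _ ⟨s, hs, rfl⟩
    exact hK s ⟨hs.1, hs.2.trans htA.2⟩ t htA hs.2 t htA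
  rw [hsup, min_eq_left (hK t htA x hx ht.2 t htA)]

lemma le_of_isMaxOn_UFval (hd1c : Continuous fun p : ℝ × ℝ => d1 p.1 p.2)
    (hd1 : ∀ a s, HasDerivAt (fun x => uA x s) (d1 a s) a)
    (hint : IntegrableOn (fun t => d1 t (r t)) (Icc a0 abar))
    (hK : IncentiveMonotoneOn d1 (Icc a0 abar) r) {aF : ℝ} (haF : aF ∈ Icc a0 abar)
    (hmax : IsMaxOn (UFval d1 uP r a0) (Icc a0 abar) aF) {a : ℝ} (ha : a ∈ Icc a0 abar) :
    uP a (r a) + uA a (r aF) - uA a0 (r aF) ≤ uP aF (r aF) + uA aF (r aF) - uA a0 (r aF) := by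
  have hint' : ∀ x ∈ Icc a0 abar, ∀ y ∈ Icc a0 abar,
      IntervalIntegrable (fun t => d1 t (r t)) volume x y := fun x hx y hy =>
    (hint.mono_set (uIcc_subset_Icc hx hy)).intervalIntegrable
  have ha0 : a0 ∈ Icc a0 abar := left_mem_Icc.2 (ha.1.trans ha.2)
  have hUF : UFval d1 uP r a0 a ≤ UFval d1 uP r a0 aF := hmax ha
  rw [UFval_eq_of_incentiveMonotoneOn hK ha, UFval_eq_of_incentiveMonotoneOn hK haF] at hUF
  have hsplit := intervalIntegral.integral_interval_sub_left (hint' a0 ha0 aF haF)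
    (hint' a0 ha0 a ha)
  have hcomp : ∫ t in a..aF, d1 t (r t) ≤ ∫ t in a..aF, d1 t (r aF) :=
    intervalIntegral.integral_le_integral_of_le_of_ge (hint' a ha aF haF)
      ((hd1c.comp (continuous_id.prodMk continuous_const)).intervalIntegrable a aF)
      (fun t ht =>
        have htA := Icc_subset_Icc ha.1 haF.2 ht
        hK t htA aF haF ht.2 t htA)
      (fun t ht =>
        have htA := Icc_subset_Icc haF.1 ha.2 ht
        hK aF haF t htA ht.1 t htA)
  rw [integral_partialDeriv_eq_sub hd1c hd1] at hcomp
  linarith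

end IntegratedGame

theorem stmt17_general (a0 abar rlo rhi : ℝ)
    (uA uO uP : ℝ → ℝ → ℝ)
    (huA : ContDiff ℝ 2 fun p : ℝ × ℝ => uA p.1 p.2)
    (d1 dO1 : ℝ → ℝ → ℝ)
    (hd1 : ∀ a r : ℝ, HasDerivAt (fun x => uA x r) (d1 a r) a)
    (hdO1 : ∀ a r : ℝ, HasDerivAt (fun x => uO x r) (dO1 a r) a)
    (rBR : ℝ → ℝ)
    (hrBR : ∀ a ∈ Set.Icc a0 abar, rBR a ∈ Set.Icc rlo rhi ∧
      ∀ r' ∈ Set.Icc rlo rhi, r' ≠ rBR a → uO a r' < uO a (rBR a))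
    (uAar uOar : ℝ → ℝ → ℝ)
    (huAar : ∀ a r : ℝ, HasDerivAt (fun s => d1 a s) (uAar a r) r)
    (huOar : ∀ a r : ℝ, HasDerivAt (fun s => dO1 a s) (uOar a r) r) :
    (∀ aP ∈ Set.Icc a0 abar, IsMaxOn (U0val d1 uP rBR a0) (Set.Icc a0 abar) aP →
      ∀ a ∈ Set.Icc a0 abar,
        uP a (rBR a) + uA a (rBR a) - uA a0 (rBR a) ≤
          uP aP (rBR aP) + uA aP (rBR aP) - uA a0 (rBR aP)) ∧
    (((∀ a ∈ Set.Icc a0 abar, ∀ r ∈ Set.Icc rlo rhi, 0 ≤ uAar a r ∧ 0 ≤ uOar a r) ∨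
      (∀ a ∈ Set.Icc a0 abar, ∀ r ∈ Set.Icc rlo rhi, uAar a r ≤ 0 ∧ uOar a r ≤ 0)) →
      ∀ aF ∈ Set.Icc a0 abar, IsMaxOn (UFval d1 uP rBR a0) (Set.Icc a0 abar) aF →
        ∀ a ∈ Set.Icc a0 abar,
          uP a (rBR a) + uA a (rBR aF) - uA a0 (rBR aF) ≤
            uP aF (rBR aF) + uA aF (rBR aF) - uA a0 (rBR aF)) := by
  have hd1c := continuous_partialDeriv_of_contDiff (huA.of_le (by norm_num)) hd1
  refine ⟨fun aP _ hmax a ha => ?_, fun hext aF haF hmax a ha => ?_⟩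
  · have hU0 : U0val d1 uP rBR a0 a ≤ U0val d1 uP rBR a0 aP := hmax ha
    rwa [U0val_eq hd1c hd1, U0val_eq hd1c hd1] at hU0
  · obtain ⟨hrm, hK⟩ := incentiveMonotoneOn_of_pureExternalities hdO1 hrBR huAar huOar hext
    have hint := integrableOn_Icc_comp_of_aemeasurable hd1c isCompact_Icc
      (fun x hx => (hrBR x hx).1) hrm
    exact le_of_isMaxOn_UFval hd1c hd1 hint hK haF hmax ha

/-- Integrated game: with `ũ(a,r) = u_P(a,r(a)) + u_A(a,r) − u_A(a₀,r)`,
(i) every maximizer of `U_0` is a Stackelberg outcome of the integrated game, and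
(ii) under pure externalities every maximizer `a_F` of `U_F` satisfies
`ũ(a_F,r(a_F)) ≥ ũ(a,r(a_F))` for all `a ∈ A`, so `(a_F, r(a_F))` is a Nash outcome. -/
theorem stmt17 (a0 abar rlo rhi : ℝ) (hA : a0 < abar) (hR : rlo < rhi)
    (uA uO uP : ℝ → ℝ → ℝ)
    (huA : ContDiff ℝ 2 fun p : ℝ × ℝ => uA p.1 p.2)
    (huO : ContDiff ℝ 2 fun p : ℝ × ℝ => uO p.1 p.2)
    (huP : ContDiff ℝ 2 fun p : ℝ × ℝ => uP p.1 p.2)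
    (hconc : ∀ a ∈ Set.Icc a0 abar, StrictConcaveOn ℝ (Set.Icc rlo rhi) (fun r => uO a r))
    (d1 dO1 : ℝ → ℝ → ℝ)
    (hd1 : ∀ a r : ℝ, HasDerivAt (fun x => uA x r) (d1 a r) a)
    (hdO1 : ∀ a r : ℝ, HasDerivAt (fun x => uO x r) (dO1 a r) a)
    (hRI : RankedIncentives d1 (Set.Icc a0 abar) (Set.Icc rlo rhi))
    (rBR : ℝ → ℝ)
    (hrBR : ∀ a ∈ Set.Icc a0 abar, rBR a ∈ Set.Icc rlo rhi ∧
      ∀ r' ∈ Set.Icc rlo rhi, r' ≠ rBR a → uO a r' < uO a (rBR a))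
    (uAar uOar : ℝ → ℝ → ℝ)
    (huAar : ∀ a r : ℝ, HasDerivAt (fun s => d1 a s) (uAar a r) r)
    (huOar : ∀ a r : ℝ, HasDerivAt (fun s => dO1 a s) (uOar a r) r) :
    (∀ aP ∈ Set.Icc a0 abar, IsMaxOn (U0val d1 uP rBR a0) (Set.Icc a0 abar) aP →
      ∀ a ∈ Set.Icc a0 abar,
        uP a (rBR a) + uA a (rBR a) - uA a0 (rBR a) ≤
          uP aP (rBR aP) + uA aP (rBR aP) - uA a0 (rBR aP)) ∧
    (((∀ a ∈ Set.Icc a0 abar, ∀ r ∈ Set.Icc rlo rhi, 0 ≤ uAar a r ∧ 0 ≤ uOar a r) ∨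
      (∀ a ∈ Set.Icc a0 abar, ∀ r ∈ Set.Icc rlo rhi, uAar a r ≤ 0 ∧ uOar a r ≤ 0)) →
      ∀ aF ∈ Set.Icc a0 abar, IsMaxOn (UFval d1 uP rBR a0) (Set.Icc a0 abar) aF →
        ∀ a ∈ Set.Icc a0 abar,
          uP a (rBR a) + uA a (rBR aF) - uA a0 (rBR aF) ≤
            uP aF (rBR aF) + uA aF (rBR aF) - uA a0 (rBR aF)) :=
  stmt17_general a0 abar rlo rhi uA uO uP huA d1 dO1 hd1 hdO1 rBR hrBR uAar uOar huAar huOar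
end

section
/- Let a* ∈ A with a* > a₀. Under Assumption 1 (ranked incentives), ∫_{a₀}^{a*} min( max_{a'' ∈ [a₀,a']} ∂₁u_A(a', r(a'')), ∂₁u_A(a', r(a*)) ) da' = ∫_{a₀}^{a*} ∂₁u_A(a', r(a*)) da' if and only if r(a₀) ≽_AI r(a*); that is, the robust value of inducing a* coincides with the partial-implementation value (so the partial-implementation solution is robustly optimal) exactly when r(a*) is dominated by r(a₀) in the order of agent incentives. -/
/-! If `r(a₀) ≽_AI r(a*)`, the choice `a'' = a₀` already puts the running maximum above
`∂₁u_A(a', r(a*))`, so the two integrands agree. Otherwise ranked incentives make `r(a*)` strictly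
better for the agent at `a₀`, so the integrand `min (…) (∂₁u_A(a', r(a*)))` lies strictly below
`∂₁u_A(a', r(a*))` at `a' = a₀`. Both integrands are continuous (the unique best reply is continuous
by Berge's maximum theorem, and a running maximum of a continuous function is continuous), so the
integrals differ. -/

open MeasureTheory Set

open Function Filter Topology

theorem ContDiff.continuous_uncurry_of_hasDerivAt_fst {E F : Type*} [NormedAddCommGroup E]
    [NormedSpace ℝ E] [NormedAddCommGroup F] [NormedSpace ℝ F] {u d : ℝ → E → F}
    (hu : ContDiff ℝ 1 (uncurry u)) (hd : ∀ a r, HasDerivAt (fun x => u x r) (d a r) a) :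
    Continuous (uncurry d) := by
  have hd_eq : uncurry d = fun p => fderiv ℝ (uncurry u) p (1, 0) := by
    ext ⟨a, r⟩
    have hline : HasDerivAt (fun x : ℝ => (x, r)) ((1 : ℝ), (0 : E)) a :=
      (hasDerivAt_id a).prodMk (hasDerivAt_const a r)
    have hchain := ((hu.differentiable one_ne_zero) (a, r)).hasFDerivAt.comp_hasDerivAt a hline
    exact (hd a r).unique hchain
  rw [hd_eq]
  exact (hu.continuous_fderiv one_ne_zero).clm_apply continuous_const

theorem IsCompact.continuousOn_unique_argmax {X Y : Type*} [TopologicalSpace X]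
    [TopologicalSpace Y] {K : Set Y} (hK : IsCompact K) {u : X → Y → ℝ}
    (hu : Continuous (uncurry u)) {s : Set X} {g : X → Y} (hgK : MapsTo g s K)
    (hmax : ∀ x ∈ s, ∀ y ∈ K, y ≠ g x → u x y < u x (g x)) : ContinuousOn g s := by
  have hmax' : ∀ x ∈ s, ∀ y ∈ K, u x y ≤ u x (g x) := fun x hx y hy => by
    rcases eq_or_ne y (g x) with rfl | hne
    exacts [le_rfl, (hmax x hx y hy hne).le]
  intro x hx
  refine hK.tendsto_nhds_of_unique_mapClusterPt (eventually_nhdsWithin_of_forall hgK)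
    fun y hy hclu => by_contra fun hne => ?_
  -- A cluster point `y ≠ g x` would give `a ∈ s` near `x` with `u a (g a) < u a (g x)`.
  have hnear : ∀ᶠ p in 𝓝 (x, y), u p.1 p.2 < u p.1 (g x) :=
    (isOpen_lt hu (hu.comp (continuous_fst.prodMk (continuous_const (y := g x))))).mem_nhds
      (hmax x hx y hy hne)
  rw [nhds_prod_eq, eventually_prod_iff] at hnear
  obtain ⟨V, hV, W, hW, hVW⟩ := hnear
  have hV' : ∀ᶠ a in 𝓝[s] x, V a ∧ a ∈ s :=
    (eventually_nhdsWithin_of_eventually_nhds hV).and self_mem_nhdsWithin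
  obtain ⟨a, haW, haV, has⟩ := ((hclu.frequently hW).and_eventually hV').exists
  exact (hVW haV haW).not_ge (hmax' a has (g x) (hgK hx))

theorem continuousOn_sSup_image_Icc {α : Type*} [ConditionallyCompleteLinearOrder α]
    [TopologicalSpace α] [OrderTopology α] {H : ℝ → ℝ → α} {a b : ℝ}
    (hH : ContinuousOn (uncurry H) (univ ×ˢ Icc a b)) :
    ContinuousOn (fun x => sSup (H x '' Icc a x)) (Icc a b) := by
  rcases lt_or_ge b a with hba | hab
  · simp [Icc_eq_empty_of_lt hba]
  -- Reparametrise `Icc a x` by the fixed compact set `Icc a b` through `t ↦ min t x`, clamped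
  -- so that `H` is only ever evaluated on `univ ×ˢ Icc a b`.
  set clamp : ℝ → ℝ → ℝ := fun t x => max a (min t (min x b))
  have hG : Continuous ↿fun x t => H x (clamp t x) :=
    hH.comp_continuous (continuous_fst.prodMk <| continuous_const.max <|
      continuous_snd.min <| continuous_fst.min continuous_const)
      fun p => ⟨trivial, le_max_left _ _, max_le hab <| (min_le_right _ _).trans (min_le_right _ _)⟩
  refine ((isCompact_Icc (a := a) (b := b)).continuous_sSup hG).continuousOn.congr fun x hx => ?_
  have hclamp : ∀ t ∈ Icc a x, clamp t x = t := fun t ht => by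
    simp only [clamp, min_eq_left hx.2, min_eq_left ht.2, max_eq_right ht.1]
  refine congrArg sSup (Set.ext fun v => ⟨?_, ?_⟩)
  · rintro ⟨t, ht, rfl⟩
    exact ⟨t, ⟨ht.1, ht.2.trans hx.2⟩, congrArg (H x) (hclamp t ht)⟩
  · rintro ⟨t, -, rfl⟩
    refine ⟨clamp t x, ⟨le_max_left _ _, max_le hx.1 ?_⟩, rfl⟩
    exact (min_le_right _ _).trans (min_le_left _ _)

theorem RankedIncentives.lt_of_not_succeqAI {d1 : ℝ → ℝ → ℝ} {A R : Set ℝ}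
    (h : RankedIncentives d1 A R) {r1 r2 : ℝ} (hr1 : r1 ∈ R) (hr2 : r2 ∈ R)
    (hn : ¬ succeqAI d1 A r1 r2) : ∀ a ∈ A, d1 a r1 < d1 a r2 :=
  h.2 r2 hr2 r1 hr1 ⟨(h.1 r1 hr1 r2 hr2).resolve_left hn, hn⟩

theorem stmt18_general (a0 abar rlo rhi : ℝ)
    (uA uO : ℝ → ℝ → ℝ)
    (huA : ContDiff ℝ 2 fun p : ℝ × ℝ => uA p.1 p.2)
    (huO : ContDiff ℝ 2 fun p : ℝ × ℝ => uO p.1 p.2)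
    (d1 : ℝ → ℝ → ℝ)
    (hd1 : ∀ a r : ℝ, HasDerivAt (fun x => uA x r) (d1 a r) a)
    (hRI : RankedIncentives d1 (Set.Icc a0 abar) (Set.Icc rlo rhi))
    (rBR : ℝ → ℝ)
    (hrBR : ∀ a ∈ Set.Icc a0 abar, rBR a ∈ Set.Icc rlo rhi ∧
      ∀ r' ∈ Set.Icc rlo rhi, r' ≠ rBR a → uO a r' < uO a (rBR a))
    (astar : ℝ) (hastar : astar ∈ Set.Icc a0 abar) (hgt : a0 < astar) :
    (∫ a' in a0..astar,
        min (sSup ((fun a'' => d1 a' (rBR a'')) '' Set.Icc a0 a')) (d1 a' (rBR astar))) =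
      (∫ a' in a0..astar, d1 a' (rBR astar)) ↔
    succeqAI d1 (Set.Icc a0 abar) (rBR a0) (rBR astar) := by
  have ha0 : a0 ∈ Icc a0 abar := ⟨le_rfl, hastar.1.trans hastar.2⟩
  have hsub : Icc a0 astar ⊆ Icc a0 abar := Icc_subset_Icc_right hastar.2
  have hd1c : Continuous (uncurry d1) :=
    (huA.of_le (by norm_num)).continuous_uncurry_of_hasDerivAt_fst hd1
  have hrBRc : ContinuousOn rBR (Icc a0 abar) :=
    isCompact_Icc.continuousOn_unique_argmax huO.continuous (fun a ha => (hrBR a ha).1)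
      fun a ha => (hrBR a ha).2
  have hH : ContinuousOn (uncurry fun x t => d1 x (rBR t)) (univ ×ˢ Icc a0 astar) :=
    hd1c.comp_continuousOn <| continuous_fst.continuousOn.prodMk <|
      (hrBRc.mono hsub).comp continuous_snd.continuousOn fun p hp => hp.2
  have hS : ContinuousOn (fun x => sSup ((fun t => d1 x (rBR t)) '' Icc a0 x)) (Icc a0 astar) :=
    continuousOn_sSup_image_Icc hH
  have hg : Continuous fun x => d1 x (rBR astar) :=
    hd1c.comp (continuous_id.prodMk continuous_const)
  have hle_sSup : ∀ x ∈ Icc a0 astar,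
      d1 x (rBR a0) ≤ sSup ((fun t => d1 x (rBR t)) '' Icc a0 x) := fun x hx =>
    le_csSup (isCompact_Icc.bddAbove_image <| hH.comp (continuousOn_const.prodMk continuousOn_id)
      fun t ht => ⟨trivial, ht.1, ht.2.trans hx.2⟩) (mem_image_of_mem _ ⟨le_rfl, hx.1⟩)
  constructor
  · intro heq
    by_contra hnd
    have hlt := hRI.lt_of_not_succeqAI (hrBR a0 ha0).1 (hrBR astar hastar).1 hnd a0 ha0
    refine (intervalIntegral.integral_lt_integral_of_continuousOn_of_le_of_exists_lt hgt
      (hS.inf hg.continuousOn) hg.continuousOn (fun x _ => min_le_right _ _) ?_).ne heq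
    refine ⟨a0, left_mem_Icc.2 hgt.le, min_lt_of_left_lt ?_⟩
    simpa only [Icc_self, image_singleton, csSup_singleton] using hlt
  · intro hdom
    refine intervalIntegral.integral_congr fun x hx => min_eq_right ?_
    rw [uIcc_of_le hgt.le] at hx
    exact (hdom x (hsub hx)).trans (hle_sSup x hx)

/-- Corollary: under ranked incentives, the robust value of inducing `a*`
coincides with the partial-implementation value iff `r(a₀) ≽_AI r(a*)`. -/
theorem stmt18 (a0 abar rlo rhi : ℝ) (hA : a0 < abar) (hR : rlo < rhi)
    (uA uO : ℝ → ℝ → ℝ)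
    (huA : ContDiff ℝ 2 fun p : ℝ × ℝ => uA p.1 p.2)
    (huO : ContDiff ℝ 2 fun p : ℝ × ℝ => uO p.1 p.2)
    (hconc : ∀ a ∈ Set.Icc a0 abar, StrictConcaveOn ℝ (Set.Icc rlo rhi) (fun r => uO a r))
    (d1 : ℝ → ℝ → ℝ)
    (hd1 : ∀ a r : ℝ, HasDerivAt (fun x => uA x r) (d1 a r) a)
    (hRI : RankedIncentives d1 (Set.Icc a0 abar) (Set.Icc rlo rhi))
    (rBR : ℝ → ℝ)
    (hrBR : ∀ a ∈ Set.Icc a0 abar, rBR a ∈ Set.Icc rlo rhi ∧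
      ∀ r' ∈ Set.Icc rlo rhi, r' ≠ rBR a → uO a r' < uO a (rBR a))
    (astar : ℝ) (hastar : astar ∈ Set.Icc a0 abar) (hgt : a0 < astar) :
    (∫ a' in a0..astar,
        min (sSup ((fun a'' => d1 a' (rBR a'')) '' Set.Icc a0 a')) (d1 a' (rBR astar))) =
      (∫ a' in a0..astar, d1 a' (rBR astar)) ↔
    succeqAI d1 (Set.Icc a0 abar) (rBR a0) (rBR astar) :=
  stmt18_general a0 abar rlo rhi uA uO huA huO d1 hd1 hRI rBR hrBR astar hastar hgt
end
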